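/- arXiv:1906.08488 — 14 statements merged into one kernel-verified Lean document; each statement's English description precedes it below -/
import Mathlib

section
/- For a parallel system of n i.i.d. components, the dual distortion function is h(p) = 1 - (1-p)^n; the function ζ(y) = (y^n - 1)/((y-1) y^{n-1}) is decreasing in y for y > 1 (for any natural number n ≥ 1). -/
theorem zeta_decreasing (n : ℕ) (hn : 1 ≤ n) :
    AntitoneOn (fun y : ℝ => (y ^ n - 1) / ((y - 1) * y ^ (n - 1))) (Set.Ioi 1) := by
  have key : ∀ y : ℝ, 1 < y →
      (y ^ n - 1) / ((y - 1) * y ^ (n - 1)) = ∑ j ∈ Finset.range n, (y⁻¹) ^ j := by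
    intro y hy
    have hy0 : (0:ℝ) < y := lt_trans one_pos hy
    have hy0' : y ≠ 0 := ne_of_gt hy0
    have h1 : y - 1 ≠ 0 := sub_ne_zero.mpr (ne_of_gt hy)
    have hpow : (y:ℝ) ^ (n-1) ≠ 0 := pow_ne_zero _ hy0'
    have hsum : y ^ (n-1) * ∑ j ∈ Finset.range n, (y⁻¹) ^ j
        = ∑ i ∈ Finset.range n, y ^ i := by
      rw [Finset.mul_sum]
      rw [← Finset.sum_range_reflect (fun i => y ^ i) n]
      apply Finset.sum_congr rfl
      intro j hj
      have hj' : j ≤ n - 1 := Nat.le_pred_of_lt (Finset.mem_range.mp hj)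
      rw [pow_sub₀ y hy0' hj', inv_pow]
    rw [eq_comm, eq_div_iff (mul_ne_zero h1 hpow)]
    calc (∑ j ∈ Finset.range n, (y⁻¹) ^ j) * ((y - 1) * y ^ (n-1))
        = (y ^ (n-1) * ∑ j ∈ Finset.range n, (y⁻¹) ^ j) * (y - 1) := by ring
      _ = (∑ i ∈ Finset.range n, y ^ i) * (y - 1) := by rw [hsum]
      _ = y ^ n - 1 := geom_sum_mul y n
  intro a ha b hb hab
  simp only [Set.mem_Ioi] at ha hb
  simp only
  rw [key a ha, key b hb]
  apply Finset.sum_le_sum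
  intro j _
  have hb0 : (0:ℝ) < b := lt_trans one_pos hb
  have : b⁻¹ ≤ a⁻¹ := inv_anti₀ (lt_trans one_pos ha) hab
  exact pow_le_pow_left₀ (inv_nonneg.mpr (le_of_lt hb0)) this j
end

section
/- Let h(p) = p^n with n ≥ 2. Then the function p ↦ ((2-p)(1-p^n)) / ((1-p)(2-p^n)) is increasing on (0,1). (This shows that for series systems of i.i.d. components, redundancy at the system level ages faster in the hazard rate than redundancy at the component level.) -/
theorem series_redundancy_ratio_increasing (n : ℕ) (hn : 2 ≤ n) :
    MonotoneOn (fun p : ℝ => ((2 - p) * (1 - p ^ n)) / ((1 - p) * (2 - p ^ n)))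
      (Set.Ioo (0 : ℝ) 1) := by
  have hvne : ∀ x ∈ Set.Ioo (0:ℝ) 1, (1 - x) * (2 - x ^ n) ≠ 0 := by
    intro x hx
    have h1 : x ^ n < 1 := pow_lt_one₀ hx.1.le hx.2 (by omega)
    have : 0 < (1 - x) * (2 - x ^ n) := by nlinarith [hx.2]
    exact ne_of_gt this
  have hderiv : ∀ x ∈ Set.Ioo (0:ℝ) 1,
      HasDerivAt (fun p : ℝ => ((2 - p) * (1 - p ^ n)) / ((1 - p) * (2 - p ^ n)))
        ((((-1) * (1 - x ^ n) + (2 - x) * (-(↑n * x ^ (n - 1)))) * ((1 - x) * (2 - x ^ n)) -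
          ((2 - x) * (1 - x ^ n)) * ((-1) * (2 - x ^ n) + (1 - x) * (-(↑n * x ^ (n - 1))))) /
          ((1 - x) * (2 - x ^ n)) ^ 2) x := by
    intro x hx
    have h1 : HasDerivAt (fun p : ℝ => 2 - p) (-1) x := by
      simpa using (hasDerivAt_id x).const_sub 2
    have h2 : HasDerivAt (fun p : ℝ => 1 - p ^ n) (-(↑n * x ^ (n - 1))) x := by
      simpa using (hasDerivAt_pow n x).const_sub 1
    have h3 : HasDerivAt (fun p : ℝ => 1 - p) (-1) x := by
      simpa using (hasDerivAt_id x).const_sub 1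
    have h4 : HasDerivAt (fun p : ℝ => 2 - p ^ n) (-(↑n * x ^ (n - 1))) x := by
      simpa using (hasDerivAt_pow n x).const_sub 2
    exact (h1.mul h2).div (h3.mul h4) (hvne x hx)
  have hkey : ∀ x ∈ Set.Ioo (0:ℝ) 1,
      0 ≤ (1 - x ^ n) * (2 - x ^ n) - ↑n * x ^ (n - 1) * ((1 - x) * (2 - x)) := by
    intro x hx
    obtain ⟨hx0, hx1⟩ := hx
    have hS : (1 - x) * (∑ k ∈ Finset.range n, x ^ k) = 1 - x ^ n := by
      have := geom_sum_mul x n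
      nlinarith [this]
    have hSge : (n : ℝ) * x ^ (n - 1) ≤ ∑ k ∈ Finset.range n, x ^ k := by
      calc (n : ℝ) * x ^ (n - 1) = ∑ _k ∈ Finset.range n, x ^ (n - 1) := by
            simp [Finset.sum_const, mul_comm]
        _ ≤ ∑ k ∈ Finset.range n, x ^ k := by
            apply Finset.sum_le_sum
            intro k hk
            exact pow_le_pow_of_le_one hx0.le hx1.le (by
              have := Finset.mem_range.mp hk; omega)
    have h1 : (↑n : ℝ) * x ^ (n - 1) * (1 - x) ≤ 1 - x ^ n := by
      rw [← hS]
      have hx1' : (0:ℝ) ≤ 1 - x := by linarith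
      nlinarith [hSge]
    have h2 : x ^ n ≤ x := by
      calc x ^ n ≤ x ^ 1 := pow_le_pow_of_le_one hx0.le hx1.le (by omega)
        _ = x := pow_one x
    have h3 : (0:ℝ) ≤ (↑n : ℝ) * x ^ (n - 1) := by positivity
    nlinarith [h1, h2, h3]
  apply monotoneOn_of_deriv_nonneg (convex_Ioo 0 1)
  · apply ContinuousOn.div
    · fun_prop
    · fun_prop
    · exact hvne
  · intro x hx
    rw [interior_Ioo] at hx
    exact ((hderiv x hx).differentiableAt).differentiableWithinAt
  · intro x hx
    rw [interior_Ioo] at hx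
    rw [(hderiv x hx).deriv]
    apply div_nonneg _ (sq_nonneg _)
    have := hkey x hx
    nlinarith [this]
end

section
/- Let a ≥ 1 be a real number and define R(p) = a(p^{a-1} - p^a)/(1 - p^a) for p ∈ (0,1). Then p R'(p)/R(p) = (a - 1 - a p + p^a)/(1 - p - p^a + p^{a+1}) is nonnegative for all p ∈ (0,1). -/
theorem pR_ratio_nonneg (a : ℝ) (ha : 1 ≤ a) (p : ℝ) (hp : p ∈ Set.Ioo (0 : ℝ) 1) :
    0 ≤ (a - 1 - a * p + p ^ a) / (1 - p - p ^ a + p ^ (a + 1)) := by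
  obtain ⟨hp0, hp1⟩ := hp
  have hbern : 1 + a * (p - 1) ≤ (1 + (p - 1)) ^ a :=
    one_add_mul_self_le_rpow_one_add (by linarith) ha
  have hnum : 0 ≤ a - 1 - a * p + p ^ a := by
    have : (1 : ℝ) + (p - 1) = p := by ring
    rw [this] at hbern; nlinarith
  have hpa1 : p ^ a ≤ 1 := Real.rpow_le_one hp0.le hp1.le (by linarith)
  have hsplit : p ^ (a + 1) = p ^ a * p := by
    rw [Real.rpow_add hp0, Real.rpow_one]
  have hden : 0 ≤ 1 - p - p ^ a + p ^ (a + 1) := by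
    rw [hsplit]; nlinarith
  positivity
end

section
/- Let a ≥ 1 be a real number. The function p ↦ (a - 1 - a p + p^a)/(1 - p - p^a + p^{a+1}) is decreasing on (0,1). -/
/-!
Writing `D p = (1 - p) (1 - p ^ a)` for the denominator, the derivative of the ratio is
`(a² p^(a-1) (1-p)² - (1-p^a)²) / D p ²`, so it suffices that
`a p^((a-1)/2) (1-p) ≤ 1 - p^a` on `(0, 1)`. Substituting `p = exp (-2t)` with `t ≥ 0` and
multiplying by `exp (a t)`, this is `a sinh t ≤ sinh (a t)`, which holds because `sinh` is convex
on `[0, ∞)` and vanishes at `0`.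
-/

open Real Set

theorem Real.convexOn_sinh_Ici : ConvexOn ℝ (Ici 0) sinh := by
  refine MonotoneOn.convexOn_of_deriv (convex_Ici 0) continuous_sinh.continuousOn
    differentiable_sinh.differentiableOn ?_
  rw [deriv_sinh, interior_Ici]
  intro x hx y hy hxy
  rwa [cosh_le_cosh, abs_of_pos hx, abs_of_pos hy]

theorem Real.mul_sinh_le_sinh_mul {a t : ℝ} (ha : 1 ≤ a) (ht : 0 ≤ t) :
    a * sinh t ≤ sinh (a * t) := by
  have ha₀ : 0 < a := by linarith
  have h := convexOn_sinh_Ici.2 (mem_Ici.2 le_rfl) (mem_Ici.2 (mul_nonneg ha₀.le ht))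
    (sub_nonneg.2 (inv_le_one_of_one_le₀ ha)) (inv_nonneg.2 ha₀.le) (sub_add_cancel 1 a⁻¹)
  simp only [smul_eq_mul, mul_zero, sinh_zero, zero_add, inv_mul_cancel_left₀ ha₀.ne'] at h
  calc a * sinh t ≤ a * (a⁻¹ * sinh (a * t)) := by gcongr
    _ = sinh (a * t) := mul_inv_cancel_left₀ ha₀.ne' _

theorem mul_exp_rpow_mul_one_sub_exp_le {a t : ℝ} (ha : 1 ≤ a) (ht : 0 ≤ t) :
    a * exp (-2 * t) ^ ((a - 1) / 2) * (1 - exp (-2 * t)) ≤ 1 - exp (-2 * t) ^ a := by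
  have h := mul_sinh_le_sinh_mul ha ht
  rw [sinh_eq, sinh_eq] at h
  simp only [← exp_mul]
  calc a * exp (-2 * t * ((a - 1) / 2)) * (1 - exp (-2 * t))
      = exp (-(a * t)) * (a * (exp t - exp (-t))) := by
        rw [show -2 * t * ((a - 1) / 2) = -(a * t) + t by ring, show -2 * t = -t + -t by ring]
        simp only [exp_add, exp_neg]
        field_simp
    _ ≤ exp (-(a * t)) * (exp (a * t) - exp (-(a * t))) := by gcongr; linarith
    _ = 1 - exp (-2 * t * a) := by
        rw [mul_sub, ← exp_add, ← exp_add, neg_add_cancel, exp_zero]; ring_nf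

theorem mul_rpow_mul_one_sub_le_one_sub_rpow {a p : ℝ} (ha : 1 ≤ a) (hp₀ : 0 < p)
    (hp₁ : p ≤ 1) : a * p ^ ((a - 1) / 2) * (1 - p) ≤ 1 - p ^ a := by
  obtain ⟨t, ht, rfl⟩ : ∃ t, 0 ≤ t ∧ p = exp (-2 * t) :=
    ⟨-log p / 2, by linarith [log_nonpos hp₀.le hp₁], by field_simp; rw [exp_log hp₀]⟩
  exact mul_exp_rpow_mul_one_sub_exp_le ha ht

theorem sq_mul_rpow_mul_one_sub_sq_le {a p : ℝ} (ha : 1 ≤ a) (hp₀ : 0 < p) (hp₁ : p ≤ 1) :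
    a ^ 2 * p ^ (a - 1) * (1 - p) ^ 2 ≤ (1 - p ^ a) ^ 2 := by
  have hsq : (p ^ ((a - 1) / 2)) ^ 2 = p ^ (a - 1) := by
    rw [← rpow_natCast, ← rpow_mul hp₀.le]; norm_num
  calc a ^ 2 * p ^ (a - 1) * (1 - p) ^ 2 = (a * p ^ ((a - 1) / 2) * (1 - p)) ^ 2 := by
        rw [mul_pow, mul_pow, hsq]
    _ ≤ (1 - p ^ a) ^ 2 :=
        pow_le_pow_left₀ (mul_nonneg (mul_nonneg (by linarith) (rpow_nonneg hp₀.le _))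
          (sub_nonneg.2 hp₁)) (mul_rpow_mul_one_sub_le_one_sub_rpow ha hp₀ hp₁) 2

theorem one_sub_sub_rpow_add_rpow_add_one {a p : ℝ} (hp : 0 < p) :
    1 - p - p ^ a + p ^ (a + 1) = (1 - p) * (1 - p ^ a) := by
  rw [rpow_add_one hp.ne']; ring

theorem hasDerivAt_rpow_ratio {a p : ℝ} (hp : 0 < p) (hD : 1 - p - p ^ a + p ^ (a + 1) ≠ 0) :
    HasDerivAt (fun q : ℝ => (a - 1 - a * q + q ^ a) / (1 - q - q ^ a + q ^ (a + 1)))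
      ((a ^ 2 * p ^ (a - 1) * (1 - p) ^ 2 - (1 - p ^ a) ^ 2) /
        (1 - p - p ^ a + p ^ (a + 1)) ^ 2) p := by
  have hN : HasDerivAt (fun q : ℝ => a - 1 - a * q + q ^ a) (0 - a * 1 + a * p ^ (a - 1)) p :=
    ((hasDerivAt_const p (a - 1)).sub ((hasDerivAt_id p).const_mul a)).add
      (hasDerivAt_rpow_const (Or.inl hp.ne'))
  have hD' : HasDerivAt (fun q : ℝ => 1 - q - q ^ a + q ^ (a + 1))
      (0 - 1 - a * p ^ (a - 1) + (a + 1) * p ^ (a + 1 - 1)) p :=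
    (((hasDerivAt_const p 1).sub (hasDerivAt_id p)).sub
      (hasDerivAt_rpow_const (Or.inl hp.ne'))).add (hasDerivAt_rpow_const (Or.inl hp.ne'))
  refine (hN.div hD' hD).congr_deriv ?_
  have hpa : p ^ a = p ^ (a - 1) * p := by rw [← rpow_add_one hp.ne', sub_add_cancel]
  rw [add_sub_cancel_right, rpow_add_one hp.ne', hpa]
  ring

theorem pR_ratio_decreasing (a : ℝ) (ha : 1 ≤ a) :
    AntitoneOn (fun p : ℝ => (a - 1 - a * p + p ^ a) / (1 - p - p ^ a + p ^ (a + 1)))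
      (Set.Ioo (0 : ℝ) 1) := by
  have hD : ∀ p ∈ Ioo (0 : ℝ) 1, 0 < 1 - p - p ^ a + p ^ (a + 1) := fun p ⟨hp₀, hp₁⟩ => by
    rw [one_sub_sub_rpow_add_rpow_add_one hp₀]
    have : p ^ a < 1 := rpow_lt_one hp₀.le hp₁ (by linarith)
    exact mul_pos (by linarith) (by linarith)
  have hderiv p (hp : p ∈ Ioo (0 : ℝ) 1) := hasDerivAt_rpow_ratio hp.1 (hD p hp).ne'
  refine antitoneOn_of_deriv_nonpos (convex_Ioo 0 1)
    (fun p hp => (hderiv p hp).continuousAt.continuousWithinAt) ?_ ?_ <;> rw [interior_Ioo]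
  · exact fun p hp => (hderiv p hp).differentiableAt.differentiableWithinAt
  · intro p hp
    rw [(hderiv p hp).deriv]
    exact div_nonpos_of_nonpos_of_nonneg
      (sub_nonpos.2 (sq_mul_rpow_mul_one_sub_sq_le ha hp.1 hp.2.le)) (sq_nonneg _)
end

section
/- For a ≥ 1 real and p ∈ (0,1), define γ₂(p) = a²(a-1) - 2a(a²-1)p + a²(a+1)p² - 2a p^{a+1}. Then γ₂(p) ≥ 0 for all p ∈ (0,1). -/
/-! The expression equals `2a · (T(p) - p^(a+1))`, where `T` is the second-order Taylor polynomial
of `x ↦ x^(a+1)` at `1`. The difference `T(x) - x^(a+1)` vanishes at `x = 1` and has derivative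
`(a+1)(1 + a(x-1) - x^a)`, which is nonpositive by Bernoulli's inequality; hence it is
nonnegative on `[0, 1]`. -/

open Set

theorem rpow_le_taylor_two_of_le_one {r x : ℝ} (hr : 2 ≤ r) (hx₀ : 0 ≤ x) (hx₁ : x ≤ 1) :
    x ^ r ≤ 1 + r * (x - 1) + r * (r - 1) / 2 * (x - 1) ^ 2 := by
  set g : ℝ → ℝ := fun y => 1 + r * (y - 1) + r * (r - 1) / 2 * (y - 1) ^ 2 - y ^ r
  set g' : ℝ → ℝ := fun y => r * (1 + (r - 1) * (y - 1) - y ^ (r - 1))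
  have hg : ∀ y, HasDerivAt g (g' y) y := fun y => by
    have hpoly := ((((hasDerivAt_id y).sub_const 1).const_mul r).const_add 1).add
      ((((hasDerivAt_id y).sub_const 1).pow 2).const_mul (r * (r - 1) / 2))
    have hrpow := Real.hasDerivAt_rpow_const (x := y) (p := r) (Or.inr (by linarith))
    exact (hpoly.sub hrpow).congr_deriv (by simp only [g', id]; ring)
  have hg'_nonpos : ∀ y ∈ interior (Icc 0 1), g' y ≤ 0 := fun y hy => by
    rw [interior_Icc] at hy
    have bernoulli : 1 + (r - 1) * (y - 1) ≤ y ^ (r - 1) := by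
      simpa using one_add_mul_self_le_rpow_one_add (s := y - 1) (by linarith [hy.1]) (by linarith)
    exact mul_nonpos_of_nonneg_of_nonpos (by linarith) (by linarith)
  have hanti : AntitoneOn g (Icc 0 1) :=
    antitoneOn_of_hasDerivWithinAt_nonpos (convex_Icc 0 1)
      (fun y _ => (hg y).continuousAt.continuousWithinAt)
      (fun y _ => (hg y).hasDerivWithinAt) hg'_nonpos
  have hg_one : g 1 = 0 := by simp [g]
  have hg_nonneg : 0 ≤ g x := hg_one ▸ hanti ⟨hx₀, hx₁⟩ ⟨zero_le_one, le_rfl⟩ hx₁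
  exact sub_nonneg.1 hg_nonneg

theorem gamma2_nonneg (a : ℝ) (ha : 1 ≤ a) (p : ℝ) (hp : p ∈ Set.Ioo (0 : ℝ) 1) :
    0 ≤ a ^ 2 * (a - 1) - 2 * a * (a ^ 2 - 1) * p + a ^ 2 * (a + 1) * p ^ 2
        - 2 * a * p ^ (a + 1) := by
  have htaylor := rpow_le_taylor_two_of_le_one (r := a + 1) (by linarith) hp.1.le hp.2.le
  have hgamma : a ^ 2 * (a - 1) - 2 * a * (a ^ 2 - 1) * p + a ^ 2 * (a + 1) * p ^ 2
      - 2 * a * p ^ (a + 1)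
      = 2 * a * (1 + (a + 1) * (p - 1) + (a + 1) * (a + 1 - 1) / 2 * (p - 1) ^ 2
          - p ^ (a + 1)) := by ring
  rw [hgamma]
  exact mul_nonneg (by linarith) (sub_nonneg.2 htaylor)
end

section
/- For natural numbers 1 ≤ k ≤ n, define H_{k|n}(p) = p h'_{k|n}(p) / h_{k|n}(p), where h_{k|n}(p) = (1/B(k, n-k+1)) ∫₀^p u^{k-1}(1-u)^{n-k} du is the reliability function of a k-out-of-n system with i.i.d. components. Then 1/H_{k|n}(p) = ∫₀¹ u^{k-1} ((1 - u p)/(1 - p))^{n-k} du for all p ∈ (0,1). -/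
/-- The reliability function of a `k`-out-of-`n` system with i.i.d. components,
where `B = ∫₀¹ u^{k-1}(1-u)^{n-k} du = B(k, n-k+1)` is the Beta function value. -/
noncomputable def koonB (k n : ℕ) : ℝ :=
  ∫ u in (0:ℝ)..1, u ^ (k - 1) * (1 - u) ^ (n - k)

noncomputable def koonRel (k n : ℕ) (p : ℝ) : ℝ :=
  (1 / koonB k n) * ∫ u in (0:ℝ)..p, u ^ (k - 1) * (1 - u) ^ (n - k)

/-- `H_{k|n}(p) = p h'_{k|n}(p) / h_{k|n}(p)`, with
`h'_{k|n}(p) = p^{k-1}(1-p)^{n-k} / B(k, n-k+1)`. -/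
noncomputable def koonH (k n : ℕ) (p : ℝ) : ℝ :=
  p * (p ^ (k - 1) * (1 - p) ^ (n - k) / koonB k n) / koonRel k n p

/-! Substituting `u ↦ u p` turns the incomplete Beta integral `∫₀^p u^{k-1}(1-u)^{n-k} du` into
`p^k ∫₀¹ u^{k-1}(1-up)^{n-k} du`; dividing by `p h'(p) B = p^k (1-p)^{n-k}` gives the claim,
the normalising constant `B` cancelling because it is positive. -/

theorem koonB_pos (k n : ℕ) : 0 < koonB k n := by
  apply intervalIntegral.intervalIntegral_pos_of_pos_on
  · exact Continuous.intervalIntegrable (by fun_prop) 0 1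
  · intro u hu
    exact mul_pos (pow_pos hu.1 _) (pow_pos (sub_pos.2 hu.2) _)
  · exact zero_lt_one

theorem integral_pow_mul_one_sub_pow_eq (a m : ℕ) (p : ℝ) :
    ∫ u in (0:ℝ)..p, u ^ a * (1 - u) ^ m =
      p ^ (a + 1) * ∫ u in (0:ℝ)..1, u ^ a * (1 - u * p) ^ m := by
  have hsubst := intervalIntegral.mul_integral_comp_mul_right
    (a := 0) (b := 1) (f := fun u : ℝ => u ^ a * (1 - u) ^ m) (c := p)
  simp only [zero_mul, one_mul] at hsubst
  rw [← hsubst, pow_succ', mul_assoc, ← intervalIntegral.integral_const_mul (p ^ a)]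
  congr 2 with u
  ring

theorem one_div_koonH (k n : ℕ) (p : ℝ) :
    1 / koonH k n p =
      (∫ u in (0:ℝ)..p, u ^ (k - 1) * (1 - u) ^ (n - k)) / (p ^ (k - 1 + 1) * (1 - p) ^ (n - k)) := by
  have hB := (koonB_pos k n).ne'
  rw [koonH, koonRel, pow_succ]
  field_simp

theorem inv_H_eq_integral_general (k n : ℕ)
    (p : ℝ) (hp : p ∈ Set.Ioo (0 : ℝ) 1) :
    1 / koonH k n p =
      ∫ u in (0:ℝ)..1, u ^ (k - 1) * ((1 - u * p) / (1 - p)) ^ (n - k) := by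
  have hpk : p ^ (k - 1 + 1) ≠ 0 := pow_ne_zero _ hp.1.ne'
  simp only [div_pow, ← mul_div_assoc]
  rw [one_div_koonH, integral_pow_mul_one_sub_pow_eq, intervalIntegral.integral_div,
    mul_div_mul_left _ _ hpk]

theorem inv_H_eq_integral (k n : ℕ) (hk : 1 ≤ k) (hkn : k ≤ n)
    (p : ℝ) (hp : p ∈ Set.Ioo (0 : ℝ) 1) :
    1 / koonH k n p =
      ∫ u in (0:ℝ)..1, u ^ (k - 1) * ((1 - u * p) / (1 - p)) ^ (n - k) :=
  inv_H_eq_integral_general k n p hp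
end

section
/- H_{k|n}(p) = p h'_{k|n}(p)/h_{k|n}(p) is decreasing in p ∈ (0,1), where h_{k|n}(p) = (1/B(k, n-k+1)) ∫₀^p u^{k-1}(1-u)^{n-k} du and 1 ≤ k ≤ n. -/
open intervalIntegral MeasureTheory Set

lemma koon_cont (m j : ℕ) : Continuous (fun u : ℝ => u ^ m * (1 - u) ^ j) := by
  continuity

lemma koonG_pos (m j : ℕ) {p : ℝ} (hp : 0 < p) (hp1 : p ≤ 1) :
    0 < ∫ u in (0:ℝ)..p, u ^ m * (1 - u) ^ j := by
  apply intervalIntegral.intervalIntegral_pos_of_pos_on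
    ((koon_cont m j).intervalIntegrable _ _)
  · intro x hx
    have h1 : 0 < x := hx.1
    have h3 : 0 < 1 - x := by have h2 := hx.2; linarith
    positivity
  · exact hp

theorem koonH_decreasing (k n : ℕ) (hk : 1 ≤ k) (hkn : k ≤ n) :
    AntitoneOn (koonH k n) (Set.Ioo (0 : ℝ) 1) := by
  obtain ⟨m, rfl⟩ : ∃ m, k = m + 1 := ⟨k - 1, (Nat.succ_pred_eq_of_pos hk).symm⟩
  intro p hp q hq hpq
  rcases eq_or_lt_of_le hpq with rfl | hpq
  · exact le_refl _
  obtain ⟨hp0, hp1⟩ := hp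
  obtain ⟨hq0, hq1⟩ := hq
  set j := n - (m + 1) with hj
  have hB : 0 < koonB (m + 1) n := by
    have := koonG_pos m j (p := 1) one_pos le_rfl
    simpa [koonB, Nat.add_sub_cancel, ← hj] using this
  have hGp : 0 < ∫ u in (0:ℝ)..p, u ^ m * (1 - u) ^ j := koonG_pos m j hp0 hp1.le
  have hGq : 0 < ∫ u in (0:ℝ)..q, u ^ m * (1 - u) ^ j := koonG_pos m j hq0 hq1.le
  have hHeq : ∀ r : ℝ,
      koonH (m + 1) n r = r ^ (m + 1) * (1 - r) ^ j / ∫ u in (0:ℝ)..r, u ^ m * (1 - u) ^ j := by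
    intro r
    simp only [koonH, koonRel, Nat.add_sub_cancel, ← hj]
    by_cases h : (∫ u in (0:ℝ)..r, u ^ m * (1 - u) ^ j) = 0
    · simp [h]
    · field_simp
      ring
  rw [hHeq p, hHeq q, div_le_div_iff₀ hGq hGp]
  -- substitution u = (p/q) v in the integral over [0,p]
  set c : ℝ := p / q with hc
  have hcq : c * q = p := div_mul_cancel₀ p hq0.ne'
  have hc0 : 0 < c := by positivity
  have hc1 : c < 1 := (div_lt_one hq0).2 hpq
  have hsub : (c • ∫ v in (0:ℝ)..q, (c * v) ^ m * (1 - c * v) ^ j)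
      = ∫ u in (0:ℝ)..p, u ^ m * (1 - u) ^ j := by
    rw [intervalIntegral.smul_integral_comp_mul_left (fun u => u ^ m * (1 - u) ^ j) c,
      mul_zero, hcq]
  rw [← hsub, smul_eq_mul]
  have hpoint : ∀ v ∈ Icc (0:ℝ) q,
      q ^ (m + 1) * (1 - q) ^ j * (c * ((c * v) ^ m * (1 - c * v) ^ j))
        ≤ p ^ (m + 1) * (1 - p) ^ j * (v ^ m * (1 - v) ^ j) := by
    intro v hv
    obtain ⟨hv0, hvq⟩ := hv
    have e1 : q ^ (m + 1) * (1 - q) ^ j * (c * ((c * v) ^ m * (1 - c * v) ^ j))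
        = p ^ (m + 1) * v ^ m * ((1 - q) * (1 - c * v)) ^ j := by
      rw [mul_pow, mul_pow, ← hcq]
      ring
    have e2 : p ^ (m + 1) * (1 - p) ^ j * (v ^ m * (1 - v) ^ j)
        = p ^ (m + 1) * v ^ m * ((1 - p) * (1 - v)) ^ j := by
      rw [mul_pow]; ring
    rw [e1, e2]
    have hcv : c * v ≤ v := by nlinarith
    have hb0 : 0 ≤ (1 - q) * (1 - c * v) := by nlinarith
    have hbase : (1 - q) * (1 - c * v) ≤ (1 - p) * (1 - v) := by nlinarith [hcq]
    have := pow_le_pow_left₀ hb0 hbase j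
    have hnn : 0 ≤ p ^ (m + 1) * v ^ m := by positivity
    exact mul_le_mul_of_nonneg_left this hnn
  calc q ^ (m + 1) * (1 - q) ^ j * (c * ∫ v in (0:ℝ)..q, (c * v) ^ m * (1 - c * v) ^ j)
      = ∫ v in (0:ℝ)..q, q ^ (m + 1) * (1 - q) ^ j * (c * ((c * v) ^ m * (1 - c * v) ^ j)) := by
        simp only [intervalIntegral.integral_const_mul]
    _ ≤ ∫ v in (0:ℝ)..q, p ^ (m + 1) * (1 - p) ^ j * (v ^ m * (1 - v) ^ j) := by
        apply intervalIntegral.integral_mono_on hq0.le _ _ hpoint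
        · apply Continuous.intervalIntegrable; fun_prop
        · apply Continuous.intervalIntegrable; fun_prop
    _ = p ^ (m + 1) * (1 - p) ^ j * ∫ v in (0:ℝ)..q, v ^ m * (1 - v) ^ j := by
        simp only [intervalIntegral.integral_const_mul]
end

section
/- For 1 ≤ k ≤ n, define R_{k|n}(p) = (1-p) h'_{k|n}(p)/(1 - h_{k|n}(p)). Then 1/R_{k|n}(p) = ∫₀¹ u^{n-k} ((1 - u(1-p))/p)^{k-1} du for all p ∈ (0,1), and R_{k|n}(p) is increasing in p ∈ (0,1). -/
/-- `R_{k|n}(p) = (1-p) h'_{k|n}(p) / (1 - h_{k|n}(p))`. -/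
noncomputable def koonR (k n : ℕ) (p : ℝ) : ℝ :=
  (1 - p) * (p ^ (k - 1) * (1 - p) ^ (n - k) / koonB k n) / (1 - koonRel k n p)

/-!
The substitution `u = 1 - v (1 - p)` turns the upper tail `∫_p^1 u^(k-1) (1-u)^(n-k) du` of the
beta integral into `(1-p)^(n-k+1) p^(k-1) ∫_0^1 v^(n-k) ((1 - v (1-p)) / p)^(k-1) dv`, which gives
the formula for `1 / R_{k|n}(p)`. Since `(1 - v (1-p)) / p = v + (1 - v) / p` decreases in `p`,
this integral is a positive decreasing function of `p`, so `R_{k|n}` increases.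
-/

open Set intervalIntegral

section BetaIntegrand

variable (a b : ℕ)

lemma integral_pow_mul_one_sub_pow_pos : 0 < ∫ u in (0:ℝ)..1, u ^ a * (1 - u) ^ b :=
  intervalIntegral_pos_of_pos_on (Continuous.intervalIntegrable (by fun_prop) 0 1)
    (fun u hu => mul_pos (pow_pos hu.1 _) (pow_pos (sub_pos.2 hu.2) _)) one_pos

lemma integral_pow_mul_one_sub_pow_tail (p : ℝ) :
    ∫ u in p..1, u ^ a * (1 - u) ^ b =
      (1 - p) ^ (b + 1) * ∫ v in (0:ℝ)..1, v ^ b * (1 - v * (1 - p)) ^ a := by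
  have h := smul_integral_comp_sub_mul (a := 0) (b := 1)
    (fun u : ℝ => u ^ a * (1 - u) ^ b) (1 - p) 1
  simp only [mul_one, mul_zero, sub_sub_cancel, sub_zero, smul_eq_mul] at h
  rw [← h, ← integral_const_mul, ← integral_const_mul]
  exact integral_congr fun v _ => by simp only [mul_pow]; ring

lemma integral_pow_mul_div_pow_eq (p : ℝ) :
    ∫ v in (0:ℝ)..1, v ^ b * ((1 - v * (1 - p)) / p) ^ a =
      (∫ v in (0:ℝ)..1, v ^ b * (1 - v * (1 - p)) ^ a) / p ^ a := by
  simp only [div_pow, ← mul_div_assoc, integral_div]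

lemma integral_pow_mul_div_pow_pos {p : ℝ} (hp : 0 < p) :
    0 < ∫ v in (0:ℝ)..1, v ^ b * ((1 - v * (1 - p)) / p) ^ a := by
  refine intervalIntegral_pos_of_pos_on (Continuous.intervalIntegrable (by fun_prop) 0 1)
    (fun v hv => mul_pos (pow_pos hv.1 _) (pow_pos (div_pos ?_ hp) _)) one_pos
  nlinarith [hv.1, hv.2]

lemma antitoneOn_integral_pow_mul_div_pow :
    AntitoneOn (fun p : ℝ => ∫ v in (0:ℝ)..1, v ^ b * ((1 - v * (1 - p)) / p) ^ a) (Ioi 0) := by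
  intro p (hp : 0 < p) q (hq : 0 < q) hpq
  refine integral_mono_on zero_le_one (Continuous.intervalIntegrable (by fun_prop) 0 1)
    (Continuous.intervalIntegrable (by fun_prop) 0 1) fun v ⟨hv0, hv1⟩ => ?_
  have split (r : ℝ) (hr : 0 < r) : (1 - v * (1 - r)) / r = v + (1 - v) / r := by
    field_simp; ring
  rw [split p hp, split q hq]
  gcongr

end BetaIntegrand

lemma one_sub_koonRel (k n : ℕ) (p : ℝ) :
    1 - koonRel k n p = (∫ u in p..1, u ^ (k - 1) * (1 - u) ^ (n - k)) / koonB k n := by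
  have hB := (integral_pow_mul_one_sub_pow_pos (k - 1) (n - k)).ne'
  have hint (x y : ℝ) : IntervalIntegrable (fun u : ℝ => u ^ (k - 1) * (1 - u) ^ (n - k))
      MeasureTheory.volume x y := Continuous.intervalIntegrable (by fun_prop) x y
  rw [koonRel, ← integral_interval_sub_left (hint 0 1) (hint 0 p)]
  unfold koonB at hB ⊢
  field_simp

lemma one_div_koonR (k n : ℕ) {p : ℝ} (hp : p ∈ Ioo (0:ℝ) 1) :
    1 / koonR k n p = ∫ v in (0:ℝ)..1, v ^ (n - k) * ((1 - v * (1 - p)) / p) ^ (k - 1) := by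
  have hB := (integral_pow_mul_one_sub_pow_pos (k - 1) (n - k)).ne'
  have hp0 := hp.1.ne'
  have hp1 := (sub_pos.2 hp.2).ne'
  rw [koonR, one_sub_koonRel, integral_pow_mul_one_sub_pow_tail, integral_pow_mul_div_pow_eq]
  unfold koonB at hB ⊢
  field_simp
  ring

theorem koonR_integral_and_increasing_general (k n : ℕ) :
    (∀ p ∈ Set.Ioo (0 : ℝ) 1,
      1 / koonR k n p =
        ∫ u in (0:ℝ)..1, u ^ (n - k) * ((1 - u * (1 - p)) / p) ^ (k - 1)) ∧
    MonotoneOn (koonR k n) (Set.Ioo (0 : ℝ) 1) := by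
  refine ⟨fun p hp => one_div_koonR k n hp, fun p hp q hq hpq => ?_⟩
  rw [← one_div_one_div (koonR k n p), ← one_div_one_div (koonR k n q),
    one_div_koonR k n hp, one_div_koonR k n hq]
  exact one_div_le_one_div_of_le (integral_pow_mul_div_pow_pos _ _ hq.1)
    (antitoneOn_integral_pow_mul_div_pow _ _ hp.1 hq.1 hpq)

theorem koonR_integral_and_increasing (k n : ℕ) (hk : 1 ≤ k) (hkn : k ≤ n) :
    (∀ p ∈ Set.Ioo (0 : ℝ) 1,
      1 / koonR k n p =
        ∫ u in (0:ℝ)..1, u ^ (n - k) * ((1 - u * (1 - p)) / p) ^ (k - 1)) ∧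
    MonotoneOn (koonR k n) (Set.Ioo (0 : ℝ) 1) :=
  koonR_integral_and_increasing_general k n
end

section
/- Let 1 ≤ k ≤ n and 1 ≤ l ≤ m with l ≤ k and n - k ≤ m - l. Then R_{k|n}(p)/R_{l|m}(p) is increasing in p ∈ (0,1), where R_{k|n}(p) = (1-p) h'_{k|n}(p)/(1-h_{k|n}(p)) and h_{k|n} is the k-out-of-n reliability function. -/
/-!
Put `x = (1 - p) / p`. Then `1 - h_{k|n}(p) = P(Bin(n, p) < k) = p^(k-1) (1-p)^(n-k+1) Q_{n,k}(x)`
with `Q_{n,k}(x) = ∑_{j<k} C(n, k-1-j) x^j`, so `R_{k|n}(p) = k C(n,k) / Q_{n,k}(x)` and the ratio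
of the two failure rates is a positive constant times `Q_{m,l}(x) / Q_{n,k}(x)`. The coefficient
ratio `C(m, l-1-j) / C(n, k-1-j)` is nonincreasing in `j` (this is where `l ≤ k` and
`n - k ≤ m - l` enter), and a quotient of polynomials with nonincreasing coefficient ratio is
nonincreasing on `[0, ∞)`. As `x` decreases in `p`, the ratio increases in `p`.
-/

open Finset MeasureTheory

lemma mul_le_mul_swap_of_succ {u v : ℕ → ℕ} {N : ℕ}
    (hstep : ∀ a < N, u a * v (a + 1) ≤ u (a + 1) * v a) (hv : ∀ a < N, 0 < v a)
    {a b : ℕ} (hab : a ≤ b) (hbN : b ≤ N) : u a * v b ≤ u b * v a := by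
  induction b, hab using Nat.le_induction with
  | base => exact le_rfl
  | succ b hab ih =>
    refine Nat.le_of_mul_le_mul_right ?_ (hv b (by omega))
    calc u a * v (b + 1) * v b = u a * v b * v (b + 1) := by ring
      _ ≤ u b * v a * v (b + 1) := Nat.mul_le_mul_right _ (ih (by omega))
      _ = u b * v (b + 1) * v a := by ring
      _ ≤ u (b + 1) * v b * v a := Nat.mul_le_mul_right _ (hstep b (by omega))
      _ = u (b + 1) * v a * v b := by ring

lemma choose_mul_choose_add_succ_le {m n d : ℕ} (hnm : n ≤ m + d) (s : ℕ) :
    m.choose s * n.choose (s + d + 1) ≤ m.choose (s + 1) * n.choose (s + d) := by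
  refine Nat.le_of_mul_le_mul_right (c := (s + 1) * (s + d + 1)) ?_ (by positivity)
  calc m.choose s * n.choose (s + d + 1) * ((s + 1) * (s + d + 1))
      = m.choose s * (s + 1) * (n.choose (s + d + 1) * (s + d + 1)) := by ring
    _ = m.choose s * (s + 1) * (n.choose (s + d) * (n - (s + d))) := by
        rw [Nat.choose_succ_right_eq]
    _ ≤ m.choose s * (s + d + 1) * (n.choose (s + d) * (m - s)) := by
        gcongr (_ * ?_) * (_ * ?_) <;> omega
    _ = m.choose s * (m - s) * (n.choose (s + d) * (s + d + 1)) := by ring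
    _ = m.choose (s + 1) * n.choose (s + d) * ((s + 1) * (s + d + 1)) := by
        rw [← Nat.choose_succ_right_eq]; ring

lemma choose_mul_choose_add_le {m n d a b : ℕ} (hnm : n ≤ m + d) (hab : a ≤ b)
    (hbn : b + d ≤ n) :
    m.choose a * n.choose (b + d) ≤ m.choose b * n.choose (a + d) :=
  mul_le_mul_swap_of_succ (u := m.choose) (v := fun a => n.choose (a + d))
    (fun s _ => by simpa [add_right_comm] using choose_mul_choose_add_succ_le hnm s)
    (fun s hs => Nat.choose_pos (by omega)) hab le_rfl

lemma pow_mul_pow_le_pow_mul_pow {x y : ℝ} (hy : 0 ≤ y) (hyx : y ≤ x) {i j : ℕ}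
    (hij : i ≤ j) :
    x ^ i * y ^ j ≤ x ^ j * y ^ i := by
  have hx := hy.trans hyx
  obtain ⟨e, rfl⟩ := Nat.exists_eq_add_of_le hij
  rw [pow_add, pow_add, mul_right_comm, mul_assoc (x ^ i)]
  gcongr

lemma sum_sum_nonneg_of_add_swap_nonneg {ι : Type*} (s : Finset ι) {c : ι → ι → ℝ}
    (hc : ∀ i ∈ s, ∀ j ∈ s, 0 ≤ c i j + c j i) :
    0 ≤ ∑ i ∈ s, ∑ j ∈ s, c i j := by
  have hsymm : 2 * ∑ i ∈ s, ∑ j ∈ s, c i j = ∑ i ∈ s, ∑ j ∈ s, (c i j + c j i) := by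
    rw [two_mul]
    nth_rw 2 [sum_comm]
    simp only [sum_add_distrib]
  have := sum_nonneg fun i hi => sum_nonneg fun j hj => hc i hi j hj
  linarith

lemma sum_mul_pow_mul_sum_mul_pow_le {A B : ℕ → ℝ}
    (hAB : ∀ i j, i ≤ j → B j * A i ≤ B i * A j) (s : Finset ℕ) {x y : ℝ} (hy : 0 ≤ y)
    (hyx : y ≤ x) :
    (∑ i ∈ s, B i * x ^ i) * (∑ j ∈ s, A j * y ^ j)
      ≤ (∑ i ∈ s, B i * y ^ i) * (∑ j ∈ s, A j * x ^ j) := by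
  rw [← sub_nonneg, sum_mul_sum, sum_mul_sum, ← sum_sub_distrib]
  simp only [← sum_sub_distrib]
  refine sum_sum_nonneg_of_add_swap_nonneg s fun i _ j _ => ?_
  have key : ∀ i j, i ≤ j →
      0 ≤ (B i * A j - B j * A i) * (x ^ j * y ^ i - x ^ i * y ^ j) := fun i j hij =>
    mul_nonneg (sub_nonneg.2 (hAB i j hij))
      (sub_nonneg.2 (pow_mul_pow_le_pow_mul_pow hy hyx hij))
  rcases le_total i j with hij | hji
  · linear_combination key i j hij
  · linear_combination key j i hji

noncomputable section

def binomLowerTail (n k : ℕ) (p : ℝ) : ℝ :=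
  ∑ i ∈ range k, (n.choose i : ℝ) * p ^ i * (1 - p) ^ (n - i)

def reflectedChoosePoly (n k : ℕ) (x : ℝ) : ℝ :=
  ∑ j ∈ range k, (n.choose (k - 1 - j) : ℝ) * x ^ j

end

lemma hasDerivAt_choose_mul_pow_mul_one_sub_pow (n i : ℕ) (p : ℝ) :
    HasDerivAt (fun q : ℝ => (n.choose i : ℝ) * q ^ i * (1 - q) ^ (n - i))
      (i * n.choose i * p ^ (i - 1) * (1 - p) ^ (n - i)
        - (i + 1 : ℕ) * n.choose (i + 1) * p ^ i * (1 - p) ^ (n - (i + 1))) p := by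
  have h := ((hasDerivAt_pow i p).const_mul (n.choose i : ℝ)).mul
    ((hasDerivAt_pow (n - i) (1 - p)).comp p ((hasDerivAt_id p).const_sub 1))
  refine h.congr_deriv ?_
  have hchoose : ((i + 1 : ℕ) : ℝ) * n.choose (i + 1) = n.choose i * ((n - i : ℕ) : ℝ) := by
    rw [mul_comm]; exact_mod_cast Nat.choose_succ_right_eq n i
  simp only [Function.comp_apply, Nat.sub_sub]
  linear_combination p ^ i * (1 - p) ^ (n - (i + 1)) * hchoose

lemma hasDerivAt_binomLowerTail (n k : ℕ) (p : ℝ) :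
    HasDerivAt (binomLowerTail n k) (-(k * n.choose k * p ^ (k - 1) * (1 - p) ^ (n - k))) p := by
  unfold binomLowerTail
  refine (HasDerivAt.fun_sum fun i _ =>
    hasDerivAt_choose_mul_pow_mul_one_sub_pow n i p).congr_deriv ?_
  simpa using
    sum_range_sub' (fun i : ℕ => (i : ℝ) * n.choose i * p ^ (i - 1) * (1 - p) ^ (n - i)) k

lemma binomLowerTail_zero {n k : ℕ} (hk : 1 ≤ k) : binomLowerTail n k 0 = 1 := by
  rw [binomLowerTail, sum_eq_single_of_mem 0 (mem_range.2 hk)]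
  · simp
  · intro i _ hi
    simp [zero_pow hi]

lemma binomLowerTail_one {n k : ℕ} (hkn : k ≤ n) : binomLowerTail n k 1 = 0 :=
  sum_eq_zero fun i hi => by simp [show n - i ≠ 0 by grind]

section BetaKernel

variable {k n : ℕ} (hk : 1 ≤ k) (hkn : k ≤ n)
include hk hkn

lemma integral_pow_mul_one_sub_pow_eq_binomLowerTail (p : ℝ) :
    ∫ u in p..1, u ^ (k - 1) * (1 - u) ^ (n - k) = binomLowerTail n k p / (k * n.choose k) := by
  have hC : (n.choose k : ℝ) ≠ 0 := by exact_mod_cast (Nat.choose_pos hkn).ne'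
  have hderiv (x : ℝ) : HasDerivAt (fun q => -binomLowerTail n k q / (k * n.choose k))
      (x ^ (k - 1) * (1 - x) ^ (n - k)) x :=
    ((hasDerivAt_binomLowerTail n k x).neg.div_const _).congr_deriv (by field_simp)
  rw [intervalIntegral.integral_eq_sub_of_hasDerivAt (fun x _ => hderiv x)
    (by apply Continuous.intervalIntegrable; fun_prop), binomLowerTail_one hkn]
  ring

lemma koonB_eq_inv : koonB k n = (k * n.choose k : ℝ)⁻¹ := by
  simpa [koonB, binomLowerTail_zero hk] using
    integral_pow_mul_one_sub_pow_eq_binomLowerTail hk hkn 0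

lemma one_sub_koonRel_s12 (p : ℝ) : 1 - koonRel k n p = binomLowerTail n k p := by
  have hc : (k * n.choose k : ℝ) ≠ 0 := by
    have := Nat.choose_pos hkn
    positivity
  have hint (a b : ℝ) :
      IntervalIntegrable (fun u : ℝ => u ^ (k - 1) * (1 - u) ^ (n - k)) volume a b := by
    apply Continuous.intervalIntegrable; fun_prop
  have h0p : ∫ u in (0 : ℝ)..p, u ^ (k - 1) * (1 - u) ^ (n - k)
      = (k * n.choose k : ℝ)⁻¹ - binomLowerTail n k p / (k * n.choose k) := by
    rw [← koonB_eq_inv hk hkn, ← integral_pow_mul_one_sub_pow_eq_binomLowerTail hk hkn,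
      ← intervalIntegral.integral_interval_sub_left (hint 0 1) (hint 0 p), koonB]
    ring
  rw [koonRel, one_div, koonB_eq_inv hk hkn, inv_inv, h0p, mul_sub, mul_inv_cancel₀ hc,
    mul_div_cancel₀ _ hc, sub_sub_cancel]

end BetaKernel

lemma binomLowerTail_eq_mul_reflectedChoosePoly {n k : ℕ} (hkn : k ≤ n) {p : ℝ}
    (hp : p ≠ 0) :
    binomLowerTail n k p
      = p ^ (k - 1) * (1 - p) ^ (n - k + 1) * reflectedChoosePoly n k ((1 - p) / p) := by
  rw [binomLowerTail, reflectedChoosePoly, ← sum_range_reflect, mul_sum]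
  refine sum_congr rfl fun j hj => ?_
  have hjk := mem_range.1 hj
  rw [show n - (k - 1 - j) = n - k + 1 + j by omega,
    show p ^ (k - 1) = p ^ (k - 1 - j) * p ^ j by rw [← pow_add, Nat.sub_add_cancel (by omega)],
    pow_add, div_pow]
  field_simp

lemma reflectedChoosePoly_pos {n k : ℕ} (hk : 1 ≤ k) (hkn : k ≤ n + 1) {x : ℝ}
    (hx : 0 ≤ x) :
    0 < reflectedChoosePoly n k x :=
  sum_pos' (fun j _ => by positivity)
    ⟨0, mem_range.2 hk, by simpa using Nat.choose_pos (show k - 1 ≤ n by omega)⟩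

lemma koonR_eq_div_reflectedChoosePoly {k n : ℕ} (hk : 1 ≤ k) (hkn : k ≤ n) {p : ℝ}
    (hp : p ∈ Set.Ioo 0 1) :
    koonR k n p = k * n.choose k / reflectedChoosePoly n k ((1 - p) / p) := by
  obtain ⟨hp0, hp1⟩ := hp
  have hQ : 0 < reflectedChoosePoly n k ((1 - p) / p) :=
    reflectedChoosePoly_pos hk (by omega) (div_nonneg (sub_nonneg.2 hp1.le) hp0.le)
  have hpow : p ^ (k - 1) * (1 - p) ^ (n - k) * (1 - p) ≠ 0 := by
    have : 0 < 1 - p := sub_pos.2 hp1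
    positivity
  rw [koonR, one_sub_koonRel_s12 hk hkn, koonB_eq_inv hk hkn,
    binomLowerTail_eq_mul_reflectedChoosePoly hkn hp0.ne', pow_succ]
  field_simp

lemma reflectedChoosePoly_eq_sum_range_of_le {m l k : ℕ} (hlk : l ≤ k) (x : ℝ) :
    reflectedChoosePoly m l x
      = ∑ i ∈ range k, (if i < l then (m.choose (l - 1 - i) : ℝ) else 0) * x ^ i := by
  rw [reflectedChoosePoly, ← sum_subset (range_subset_range.2 hlk)
    fun i _ hi => by simp [show ¬ i < l from fun h => hi (mem_range.2 h)]]
  exact sum_congr rfl fun i hi => by simp [mem_range.1 hi]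

lemma reflectedChoosePoly_div_antitoneOn {k n l m : ℕ} (hkn : k ≤ n) (hl : 1 ≤ l)
    (hlk : l ≤ k) (hnm : n + l ≤ m + k) :
    AntitoneOn (fun x => reflectedChoosePoly m l x / reflectedChoosePoly n k x) (Set.Ici 0) := by
  intro y hy x hx hyx
  rw [Set.mem_Ici] at hx hy
  dsimp only
  rw [div_le_div_iff₀ (reflectedChoosePoly_pos (by omega) (by omega) hx)
      (reflectedChoosePoly_pos (by omega) (by omega) hy),
    reflectedChoosePoly_eq_sum_range_of_le hlk, reflectedChoosePoly_eq_sum_range_of_le hlk]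
  refine sum_mul_pow_mul_sum_mul_pow_le (fun i j hij => ?_) (range k) hy hyx
  by_cases hjl : j < l
  · have := choose_mul_choose_add_le (m := m) (n := n) (d := k - l) (a := l - 1 - j)
      (b := l - 1 - i) (by omega) (by omega) (by omega)
    rw [show l - 1 - i + (k - l) = k - 1 - i by omega,
      show l - 1 - j + (k - l) = k - 1 - j by omega] at this
    simp only [hjl, lt_of_le_of_lt hij hjl, if_true]
    exact_mod_cast this
  · simp only [hjl, if_false, zero_mul]
    split_ifs <;> positivity

lemma koonR_div_koonR {k n l m : ℕ} (hk : 1 ≤ k) (hkn : k ≤ n) (hl : 1 ≤ l) (hlm : l ≤ m)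
    {p : ℝ} (hp : p ∈ Set.Ioo 0 1) :
    koonR k n p / koonR l m p = k * n.choose k / (l * m.choose l)
      * (reflectedChoosePoly m l ((1 - p) / p) / reflectedChoosePoly n k ((1 - p) / p)) := by
  rw [koonR_eq_div_reflectedChoosePoly hk hkn hp, koonR_eq_div_reflectedChoosePoly hl hlm hp,
    div_div_div_eq, div_mul_div_comm, mul_comm (reflectedChoosePoly n k _)]

theorem koonR_ratio_increasing (k n l m : ℕ) (hk : 1 ≤ k) (hkn : k ≤ n)
    (hl : 1 ≤ l) (hlm : l ≤ m) (hlk : l ≤ k) (hnm : n - k ≤ m - l) :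
    MonotoneOn (fun p => koonR k n p / koonR l m p) (Set.Ioo (0 : ℝ) 1) := by
  have hQ := reflectedChoosePoly_div_antitoneOn (m := m) hkn hl hlk (by omega)
  intro p hp q hq hpq
  have hx : ∀ {r : ℝ}, r ∈ Set.Ioo (0 : ℝ) 1 → (1 - r) / r ∈ Set.Ici 0 :=
    fun hr => div_nonneg (sub_nonneg.2 hr.2.le) hr.1.le
  have hxqp : (1 - q) / q ≤ (1 - p) / p := by
    rw [div_le_div_iff₀ hq.1 hp.1]
    nlinarith
  dsimp only
  rw [koonR_div_koonR hk hkn hl hlm hp, koonR_div_koonR hk hkn hl hlm hq]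
  gcongr ?_ * ?_
  exact hQ (hx hq) (hx hp) hxqp
end

section
/- For 1 ≤ k ≤ n, the function p R'_{k|n}(p)/R_{k|n}(p) is decreasing in p ∈ (0,1). Equivalently, N(p)/D(p) is decreasing in p ∈ (0,1), where N(p) = ∫₀¹ u^{n-k}((1-u(1-p))/p)^{k-2}((1-u)/p) du and D(p) = ∫₀¹ u^{n-k}((1-u(1-p))/p)^{k-1} du. -/
/-!
Substituting `t = 1 - (1 - p) u` in the tail integral
`∫_p^1 t^(k-1) (1-t)^(n-k) dt = B (1 - h(p))` gives `R(p) = 1 / D(p)`, and integrating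
`d/du [u^(n-k+1) ((1 - u(1-p))/p)^(k-1)]` over `[0, 1]` turns the logarithmic derivative into
`p R'(p) / R(p) = (k - 1) N(p) / D(p)`.

`N(p) / D(p)` is the mean of `φ_p(u) = (1 - u) / (1 - u(1-p))` against the weight
`w_p(u) = u^(n-k) ((1 - u(1-p))/p)^(k-1)`. For `p ≤ q`, `φ_q ≤ φ_p`, and `w_q / w_p` increases
in `u` while `φ_p` decreases, so Chebyshev's integral inequality moves the mean down.
-/

open Set intervalIntegral
open MeasureTheory (volume)

theorem exists_mul_sub_nonpos_of_antitoneOn_of_monotoneOn {f ρ : ℝ → ℝ} {a b : ℝ}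
    (hab : a ≤ b) (hf : AntitoneOn f (Icc a b)) (hρ : MonotoneOn ρ (Icc a b)) :
    ∃ c, ∀ u ∈ Icc a b, f u * (ρ u - c) ≤ 0 := by
  have ha : a ∈ Icc a b := left_mem_Icc.2 hab
  have hb : b ∈ Icc a b := right_mem_Icc.2 hab
  set S := insert (ρ a) (ρ '' {u ∈ Icc a b | 0 < f u})
  have hS : BddAbove S := ⟨ρ b, by
    rintro _ (rfl | ⟨u, hu, rfl⟩)
    exacts [hρ ha hb hab, hρ hu.1 hb hu.1.2]⟩
  refine ⟨sSup S, fun u hu => ?_⟩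
  rcases lt_trichotomy (f u) 0 with hneg | hzero | hpos
  · refine mul_nonpos_of_nonpos_of_nonneg hneg.le
      (sub_nonneg.2 (csSup_le (insert_nonempty _ _) ?_))
    rintro _ (rfl | ⟨v, hv, rfl⟩)
    · exact hρ ha hu hu.1
    · exact hρ hv.1 hu (le_of_not_ge fun huv => (hf hu hv.1 huv).not_gt (hneg.trans hv.2))
  · simp [hzero]
  · exact mul_nonpos_of_nonneg_of_nonpos hpos.le
      (sub_nonpos.2 (le_csSup hS (mem_insert_of_mem _ ⟨u, ⟨hu, hpos⟩, rfl⟩)))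

theorem integral_mul_mul_le_of_antitoneOn_of_monotoneOn {f ρ g : ℝ → ℝ} {a b : ℝ}
    (hab : a ≤ b) (hf : AntitoneOn f (Icc a b)) (hρ : MonotoneOn ρ (Icc a b))
    (hg : ∀ u ∈ Icc a b, 0 ≤ g u)
    (hfc : ContinuousOn f (Icc a b)) (hρc : ContinuousOn ρ (Icc a b))
    (hgc : ContinuousOn g (Icc a b)) :
    (∫ u in a..b, f u * ρ u * g u) * (∫ u in a..b, g u)
      ≤ (∫ u in a..b, f u * g u) * ∫ u in a..b, ρ u * g u := by
  have hI {h : ℝ → ℝ} (h_cont : ContinuousOn h (Icc a b)) : IntervalIntegrable h volume a b :=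
    h_cont.intervalIntegrable_of_Icc hab
  set G := ∫ u in a..b, g u
  set F := ∫ u in a..b, f u * g u
  have hG : 0 ≤ G := integral_nonneg hab hg
  obtain ⟨c, hc⟩ := exists_mul_sub_nonpos_of_antitoneOn_of_monotoneOn
    (f := fun u => G * f u - F) hab
    (fun u hu v hv huv => sub_le_sub_right (mul_le_mul_of_nonneg_left (hf hu hv huv) hG) F) hρ
  have hsign : ∫ u in a..b, (G * f u - F) * (ρ u - c) * g u ≤ 0 := by
    refine (integral_mono_on hab (hI (by fun_prop (disch := assumption)))
      intervalIntegrable_const fun u hu => ?_).trans_eq integral_zero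
    exact mul_nonpos_of_nonpos_of_nonneg (hc u hu) (hg u hu)
  -- the level `c` drops out because `∫ (G f - F) g = 0`
  have hexpand : ∫ u in a..b, (G * f u - F) * (ρ u - c) * g u
      = G * (∫ u in a..b, f u * ρ u * g u) - F * (∫ u in a..b, ρ u * g u)
        - c * (G * F - F * G) := by
    have hfρg : IntervalIntegrable (fun u => f u * ρ u * g u) volume a b := hI (by fun_prop)
    have hρg : IntervalIntegrable (fun u => ρ u * g u) volume a b := hI (by fun_prop)
    have hfg : IntervalIntegrable (fun u => f u * g u) volume a b := hI (by fun_prop)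
    have hg' : IntervalIntegrable g volume a b := hI hgc
    calc ∫ u in a..b, (G * f u - F) * (ρ u - c) * g u
        = ∫ u in a..b, ((G * (f u * ρ u * g u) - F * (ρ u * g u))
            - c * (G * (f u * g u) - F * g u)) := integral_congr fun u _ => by ring
      _ = _ := by
        rw [integral_sub ((hfρg.const_mul G).sub (hρg.const_mul F))
            (((hfg.const_mul G).sub (hg'.const_mul F)).const_mul c), integral_const_mul,
          integral_sub (hfρg.const_mul G) (hρg.const_mul F),
          integral_sub (hfg.const_mul G) (hg'.const_mul F)]
        simp only [integral_const_mul, G, F]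
  linarith

noncomputable def koonD (k n : ℕ) (p : ℝ) : ℝ :=
  ∫ u in (0:ℝ)..1, u ^ (n - k) * ((1 - u * (1 - p)) / p) ^ (k - 1)

noncomputable def koonN (k n : ℕ) (p : ℝ) : ℝ :=
  ∫ u in (0:ℝ)..1, u ^ (n - k) * ((1 - u * (1 - p)) / p) ^ (k - 2) * ((1 - u) / p)

theorem one_sub_mul_one_sub_pos {p u : ℝ} (hp : 0 < p) (hu : u ∈ Icc (0:ℝ) 1) :
    0 < 1 - u * (1 - p) := by
  obtain ⟨hu0, hu1⟩ := hu
  rcases le_total p 1 with h | h <;> nlinarith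

theorem koonD_pos (k n : ℕ) {p : ℝ} (hp : 0 < p) : 0 < koonD k n p := by
  refine intervalIntegral_pos_of_pos_on (Continuous.intervalIntegrable (by fun_prop) 0 1)
    (fun u hu => ?_) one_pos
  have := one_sub_mul_one_sub_pos hp (Ioo_subset_Icc_self hu)
  have := hu.1
  positivity

theorem antitoneOn_one_sub_div_one_sub_mul {p : ℝ} (hp : 0 < p) :
    AntitoneOn (fun u => (1 - u) / (1 - u * (1 - p))) (Icc 0 1) := by
  intro u hu v hv huv
  have := one_sub_mul_one_sub_pos hp hu
  have := one_sub_mul_one_sub_pos hp hv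
  dsimp only
  rw [div_le_div_iff₀ (by assumption) (by assumption)]
  nlinarith

theorem one_sub_div_one_sub_mul_le {p q u : ℝ} (hp : 0 < p) (hpq : p ≤ q)
    (hu : u ∈ Icc (0:ℝ) 1) :
    (1 - u) / (1 - u * (1 - q)) ≤ (1 - u) / (1 - u * (1 - p)) := by
  have := one_sub_mul_one_sub_pos hp hu
  gcongr
  · linarith [hu.2]
  · nlinarith [hu.1]

theorem monotoneOn_div_pow {p q : ℝ} (hp : 0 < p) (hpq : p ≤ q) (m : ℕ) :
    MonotoneOn (fun u => ((1 - u * (1 - q)) / q / ((1 - u * (1 - p)) / p)) ^ m) (Icc 0 1) := by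
  intro u hu v hv huv
  dsimp only
  have hq : 0 < q := hp.trans_le hpq
  have := one_sub_mul_one_sub_pos hp hu
  have := one_sub_mul_one_sub_pos hp hv
  have := one_sub_mul_one_sub_pos hq hu
  gcongr ?_ ^ m
  rw [div_div_div_eq, div_div_div_eq, div_le_div_iff₀ (by positivity) (by positivity)]
  nlinarith [mul_nonneg (mul_nonneg (sub_nonneg.2 huv) (sub_nonneg.2 hpq)) (mul_pos hp hq).le]

theorem koonN_eq_integral_mul (n : ℕ) {k : ℕ} (hk : 2 ≤ k) {p : ℝ} (hp : 0 < p) :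
    koonN k n p = ∫ u in (0:ℝ)..1,
      (1 - u) / (1 - u * (1 - p)) * (u ^ (n - k) * ((1 - u * (1 - p)) / p) ^ (k - 1)) := by
  refine integral_congr fun u hu => ?_
  have := (one_sub_mul_one_sub_pos hp (by rwa [uIcc_of_le zero_le_one] at hu)).ne'
  have := hp.ne'
  obtain ⟨j, rfl⟩ := Nat.exists_eq_add_of_le hk
  simp only [show 2 + j - 1 = j + 1 by omega, show 2 + j - 2 = j by omega, pow_succ]
  field_simp

theorem antitoneOn_koonN_div_koonD (n : ℕ) {k : ℕ} (hk : 2 ≤ k) :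
    AntitoneOn (fun p => koonN k n p / koonD k n p) (Ioi 0) := by
  intro p hp q hq hpq
  rw [mem_Ioi] at hp hq
  dsimp only
  rw [div_le_div_iff₀ (koonD_pos k n hq) (koonD_pos k n hp)]
  set φ : ℝ → ℝ → ℝ := fun p u => (1 - u) / (1 - u * (1 - p))
  set w : ℝ → ℝ → ℝ := fun p u => u ^ (n - k) * ((1 - u * (1 - p)) / p) ^ (k - 1)
  set ρ : ℝ → ℝ := fun u => ((1 - u * (1 - q)) / q / ((1 - u * (1 - p)) / p)) ^ (k - 1)
  have hρw : ∀ u ∈ uIcc (0:ℝ) 1, ρ u * w p u = w q u := fun u hu => by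
    have := (one_sub_mul_one_sub_pos hp (by rwa [uIcc_of_le zero_le_one] at hu)).ne'
    have := hp.ne'
    have := hq.ne'
    simp only [ρ, w, div_pow]
    field_simp
  have hφc {r : ℝ} (hr : 0 < r) : ContinuousOn (φ r) (Icc 0 1) :=
    ContinuousOn.div (by fun_prop) (by fun_prop) fun u hu => (one_sub_mul_one_sub_pos hr hu).ne'
  have hρc : ContinuousOn ρ (Icc 0 1) :=
    (ContinuousOn.div (by fun_prop) (by fun_prop)
      fun u hu => (div_pos (one_sub_mul_one_sub_pos hp hu) hp).ne').pow _
  have hwc {r : ℝ} : ContinuousOn (w r) (Icc 0 1) := by fun_prop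
  have hw {r : ℝ} (hr : 0 < r) : ∀ u ∈ Icc (0:ℝ) 1, 0 ≤ w r u := fun u hu =>
    mul_nonneg (pow_nonneg hu.1 _) (pow_nonneg (div_pos (one_sub_mul_one_sub_pos hr hu) hr).le _)
  calc koonN k n q * koonD k n p
      = (∫ u in (0:ℝ)..1, φ q u * w q u) * ∫ u in (0:ℝ)..1, w p u := by
        rw [koonN_eq_integral_mul n hk hq]; rfl
    _ ≤ (∫ u in (0:ℝ)..1, φ p u * ρ u * w p u) * ∫ u in (0:ℝ)..1, w p u := by
        refine mul_le_mul_of_nonneg_right ?_ (koonD_pos k n hp).le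
        refine integral_mono_on zero_le_one (((hφc hq).mul hwc).intervalIntegrable_of_Icc
          zero_le_one) ((((hφc hp).mul hρc).mul hwc).intervalIntegrable_of_Icc zero_le_one)
          fun u hu => ?_
        rw [mul_assoc, hρw u (by rwa [uIcc_of_le zero_le_one])]
        exact mul_le_mul_of_nonneg_right (one_sub_div_one_sub_mul_le hp hpq hu) (hw hq u hu)
    _ ≤ (∫ u in (0:ℝ)..1, φ p u * w p u) * ∫ u in (0:ℝ)..1, ρ u * w p u :=
        integral_mul_mul_le_of_antitoneOn_of_monotoneOn zero_le_one
          (antitoneOn_one_sub_div_one_sub_mul hp) (monotoneOn_div_pow hp hpq _) (hw hp) (hφc hp)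
          hρc hwc
    _ = koonN k n p * koonD k n q := by
        rw [koonN_eq_integral_mul n hk hp, integral_congr hρw]; rfl

noncomputable def koonTail (k n : ℕ) (p : ℝ) : ℝ :=
  ∫ t in p..1, t ^ (k - 1) * (1 - t) ^ (n - k)

theorem koonTail_pos (k n : ℕ) {p : ℝ} (hp0 : 0 ≤ p) (hp1 : p < 1) : 0 < koonTail k n p := by
  refine intervalIntegral_pos_of_pos_on (Continuous.intervalIntegrable (by fun_prop) _ _)
    (fun t ht => ?_) hp1
  have := hp0.trans_lt ht.1
  have := sub_pos.2 ht.2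
  positivity

theorem hasDerivAt_koonTail (k n : ℕ) (p : ℝ) :
    HasDerivAt (koonTail k n) (-(p ^ (k - 1) * (1 - p) ^ (n - k))) p :=
  integral_hasDerivAt_left (Continuous.intervalIntegrable (by fun_prop) _ _)
    (Continuous.stronglyMeasurableAtFilter (by fun_prop) _ _) (by fun_prop)

theorem koonR_eq_div_koonTail (k n : ℕ) :
    koonR k n = fun p => p ^ (k - 1) * (1 - p) ^ (n - k + 1) / koonTail k n p := by
  have hB : koonB k n ≠ 0 := (koonTail_pos k n le_rfl zero_lt_one).ne'
  have hsplit (p : ℝ) : 1 - koonRel k n p = koonTail k n p / koonB k n := by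
    have hint (a b : ℝ) : IntervalIntegrable (fun t : ℝ => t ^ (k - 1) * (1 - t) ^ (n - k))
        volume a b := Continuous.intervalIntegrable (by fun_prop) a b
    have hadd := integral_add_adjacent_intervals (hint 0 p) (hint p 1)
    rw [koonRel]
    field_simp
    rw [koonB, koonTail, ← hadd]
    ring
  ext p
  rw [koonR, hsplit, pow_succ]
  field_simp

theorem koonTail_eq_mul_koonD (k n : ℕ) {p : ℝ} (hp : p ≠ 0) :
    koonTail k n p = p ^ (k - 1) * (1 - p) ^ (n - k + 1) * koonD k n p := by
  have hsub := integral_comp_mul_deriv (a := 0) (b := 1) (f := fun u => 1 - u * (1 - p))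
    (f' := fun _ => -(1 - p)) (g := fun t => t ^ (k - 1) * (1 - t) ^ (n - k))
    (fun u _ => by simpa using ((hasDerivAt_id u).mul_const (1 - p)).const_sub 1)
    continuousOn_const (by fun_prop)
  simp only [Function.comp_apply, zero_mul, sub_zero, one_mul, sub_sub_cancel] at hsub
  rw [koonTail, integral_symm, ← hsub, koonD, ← integral_neg, ← integral_const_mul]
  refine integral_congr fun u _ => ?_
  simp only [div_pow, mul_pow, pow_succ]
  field_simp

theorem koonD_integration_by_parts (n : ℕ) {k : ℕ} (hk : 2 ≤ k) {p : ℝ} (hp : p ≠ 0) :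
    ((n - k : ℕ) + 1) * koonD k n p - (k - 1 : ℕ) * ((1 - p) / p) * (koonD k n p - koonN k n p)
      = 1 := by
  obtain ⟨j, rfl⟩ := Nat.exists_eq_add_of_le hk
  rw [koonD, koonN]
  simp only [show 2 + j - 1 = j + 1 by omega, Nat.add_sub_cancel_left]
  set m := n - (2 + j)
  have hF (u : ℝ) : HasDerivAt (fun u => u ^ (m + 1) * ((1 - u * (1 - p)) / p) ^ (j + 1))
      ((m + 1) * (u ^ m * ((1 - u * (1 - p)) / p) ^ (j + 1)) - (j + 1 : ℕ) * ((1 - p) / p) *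
        (u ^ m * ((1 - u * (1 - p)) / p) ^ (j + 1)
          - u ^ m * ((1 - u * (1 - p)) / p) ^ j * ((1 - u) / p))) u := by
    have := (hasDerivAt_pow (m + 1) u).mul
      ((((hasDerivAt_id u).mul_const (1 - p)).const_sub 1).div_const p |>.pow (j + 1))
    refine this.congr_deriv ?_
    simp only [id_eq, Nat.add_sub_cancel, Pi.pow_apply, pow_succ]
    push_cast
    field_simp
    ring
  have hFTC := integral_eq_sub_of_hasDerivAt (a := 0) (b := 1) (fun u _ => hF u)
    (Continuous.intervalIntegrable (by fun_prop) 0 1)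
  have hint {f : ℝ → ℝ} (hf : Continuous f) : IntervalIntegrable f volume 0 1 :=
    hf.intervalIntegrable 0 1
  rw [integral_sub ((hint (by fun_prop)).const_mul _) ((hint (by fun_prop)).const_mul _),
    integral_const_mul, integral_const_mul, integral_sub (hint (by fun_prop)) (hint (by fun_prop))]
    at hFTC
  have hboundary : (1:ℝ) ^ (m + 1) * ((1 - 1 * (1 - p)) / p) ^ (j + 1)
      - 0 ^ (m + 1) * ((1 - 0 * (1 - p)) / p) ^ (j + 1) = 1 := by
    simp [hp]
  exact hFTC.trans hboundary

theorem mul_deriv_koonR_div_koonR (n : ℕ) {k : ℕ} (hk : 2 ≤ k) {p : ℝ}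
    (hp : p ∈ Ioo (0:ℝ) 1) :
    p * deriv (koonR k n) p / koonR k n p = (k - 1 : ℕ) * (koonN k n p / koonD k n p) := by
  obtain ⟨hp0, hp1⟩ := hp
  have hR : HasDerivAt (fun p => p ^ (k - 1) * (1 - p) ^ (n - k + 1) / koonTail k n p) _ p :=
    ((hasDerivAt_pow (k - 1) p).mul (((hasDerivAt_id p).const_sub 1).pow (n - k + 1))).div
      (hasDerivAt_koonTail k n p) (koonTail_pos k n hp0.le hp1).ne'
  rw [koonR_eq_div_koonTail, hR.deriv]
  have ibp := koonD_integration_by_parts n hk hp0.ne'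
  have := koonD_pos k n hp0
  have := sub_pos.2 hp1
  obtain ⟨j, rfl⟩ := Nat.exists_eq_add_of_le hk
  simp only [koonTail_eq_mul_koonD _ n hp0.ne', show 2 + j - 1 = j + 1 by omega,
    Nat.add_sub_cancel, Pi.mul_apply, Pi.pow_apply, id_eq, pow_succ] at ibp ⊢
  field_simp at ibp ⊢
  push_cast at ibp ⊢
  linear_combination -ibp

theorem koonR_log_deriv_decreasing_general (k n : ℕ) (hk : 2 ≤ k)
    (R' : ℝ → ℝ) (hR' : ∀ p ∈ Set.Ioo (0 : ℝ) 1, HasDerivAt (koonR k n) (R' p) p) :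
    AntitoneOn (fun p => p * R' p / koonR k n p) (Set.Ioo (0 : ℝ) 1) ∧
      AntitoneOn (fun p =>
        (∫ u in (0:ℝ)..1, u ^ (n - k) * ((1 - u * (1 - p)) / p) ^ (k - 2)
            * ((1 - u) / p)) /
        (∫ u in (0:ℝ)..1, u ^ (n - k) * ((1 - u * (1 - p)) / p) ^ (k - 1)))
        (Set.Ioo (0 : ℝ) 1) := by
  have hND : AntitoneOn (fun p => koonN k n p / koonD k n p) (Ioo 0 1) :=
    (antitoneOn_koonN_div_koonD n hk).mono Ioo_subset_Ioi_self
  refine ⟨fun p hp q hq hpq => ?_, hND⟩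
  simp only [← (hR' p hp).deriv, ← (hR' q hq).deriv, mul_deriv_koonR_div_koonR n hk hp,
    mul_deriv_koonR_div_koonR n hk hq]
  exact mul_le_mul_of_nonneg_left (hND hp hq hpq) (Nat.cast_nonneg _)

theorem koonR_log_deriv_decreasing (k n : ℕ) (hk : 2 ≤ k) (hkn : k ≤ n)
    (R' : ℝ → ℝ) (hR' : ∀ p ∈ Set.Ioo (0 : ℝ) 1, HasDerivAt (koonR k n) (R' p) p) :
    AntitoneOn (fun p => p * R' p / koonR k n p) (Set.Ioo (0 : ℝ) 1) ∧
      AntitoneOn (fun p =>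
        (∫ u in (0:ℝ)..1, u ^ (n - k) * ((1 - u * (1 - p)) / p) ^ (k - 2)
            * ((1 - u) / p)) /
        (∫ u in (0:ℝ)..1, u ^ (n - k) * ((1 - u * (1 - p)) / p) ^ (k - 1)))
        (Set.Ioo (0 : ℝ) 1) :=
  koonR_log_deriv_decreasing_general k n hk R' hR'
end

section
/- Let h : [0,1] → [0,1] be differentiable and increasing with h(0)=0 and h(1)=1, and define H(p) = p h'(p)/h(p) for p ∈ (0,1). Then the following are equivalent: (a) p H'(p)/H(p) is decreasing on (0,1); (b) for every fixed q ∈ (0,1), the function p ↦ H(p/q)/H(p) is decreasing on (0,q). (This characterizes when a used coherent system ages faster in the hazard rate than the coherent system of used components.) -/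
open Set

/-!
With `E p = p H'(p) / H(p)`, the derivative of `p ↦ H(p/q) / H(p)` at `x` is the positive factor
`H(x/q) / (x H(x))` times `E(x/q) - E(x)`, where `x/q ≥ x`. So all these ratios decrease iff
`E(x/q) ≤ E(x)` whenever `0 < x < q < 1`; as every pair `0 < x < y < 1` is of the form
`(x, x/q)` with `q = x/y`, this says exactly that `E` decreases.
-/

noncomputable def elasticity (f f' : ℝ → ℝ) (p : ℝ) : ℝ := p * f' p / f p

theorem HasDerivAt.comp_div_div_self {f f' : ℝ → ℝ} {q x : ℝ} (hq : q ≠ 0) (hx : x ≠ 0)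
    (hfx : f x ≠ 0) (hfxq : f (x / q) ≠ 0)
    (hdx : HasDerivAt f (f' x) x) (hdxq : HasDerivAt f (f' (x / q)) (x / q)) :
    HasDerivAt (fun p => f (p / q) / f p)
      (f (x / q) / (x * f x) * (elasticity f f' (x / q) - elasticity f f' x)) x := by
  have hnum : HasDerivAt (fun p => f (p / q)) (f' (x / q) * (1 / q)) x := by
    simpa [Function.comp_def] using hdxq.comp x ((hasDerivAt_id x).div_const q)
  refine (hnum.fun_div hdx hfx).congr_deriv ?_
  simp only [elasticity]
  field_simp

section

variable {H H' : ℝ → ℝ} {q x : ℝ}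

theorem div_mem_Ioo_zero_one (hx : x ∈ Ioo 0 q) : x / q ∈ Ioo (0 : ℝ) 1 :=
  ⟨div_pos hx.1 (hx.1.trans hx.2), (div_lt_one (hx.1.trans hx.2)).2 hx.2⟩

theorem hasDerivAt_ratio_comp_div (hHpos : ∀ p ∈ Ioo (0 : ℝ) 1, 0 < H p)
    (hHdiff : ∀ p ∈ Ioo (0 : ℝ) 1, HasDerivAt H (H' p) p) (hq : q ≤ 1) (hx : x ∈ Ioo 0 q) :
    HasDerivAt (fun p => H (p / q) / H p)
      (H (x / q) / (x * H x) * (elasticity H H' (x / q) - elasticity H H' x)) x := by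
  have hx1 : x ∈ Ioo (0 : ℝ) 1 := Ioo_subset_Ioo_right hq hx
  have hxq1 := div_mem_Ioo_zero_one hx
  exact (hHdiff x hx1).comp_div_div_self (hx.1.trans hx.2).ne' hx.1.ne' (hHpos x hx1).ne'
    (hHpos _ hxq1).ne' (hHdiff _ hxq1)

theorem ratio_deriv_nonpos_iff (hHpos : ∀ p ∈ Ioo (0 : ℝ) 1, 0 < H p) (hq : q ≤ 1)
    (hx : x ∈ Ioo 0 q) :
    H (x / q) / (x * H x) * (elasticity H H' (x / q) - elasticity H H' x) ≤ 0 ↔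
      elasticity H H' (x / q) ≤ elasticity H H' x := by
  have hfactor : 0 < H (x / q) / (x * H x) :=
    div_pos (hHpos _ (div_mem_Ioo_zero_one hx))
      (mul_pos hx.1 (hHpos x (Ioo_subset_Ioo_right hq hx)))
  rw [← mul_zero (H (x / q) / (x * H x)), mul_le_mul_iff_of_pos_left hfactor, sub_nonpos]

end

theorem used_system_aging_faster_iff_general (H H' : ℝ → ℝ)
    (hHpos : ∀ p ∈ Set.Ioo (0 : ℝ) 1, 0 < H p)
    (hHdiff : ∀ p ∈ Set.Ioo (0 : ℝ) 1, HasDerivAt H (H' p) p) :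
    AntitoneOn (fun p => p * H' p / H p) (Set.Ioo (0 : ℝ) 1) ↔
      ∀ q ∈ Set.Ioo (0 : ℝ) 1,
        AntitoneOn (fun p => H (p / q) / H p) (Set.Ioo 0 q) := by
  change AntitoneOn (elasticity H H') _ ↔ _
  constructor
  · intro hE q hq
    have hderiv x (hx : x ∈ Ioo 0 q) := hasDerivAt_ratio_comp_div hHpos hHdiff hq.2.le hx
    refine antitoneOn_of_hasDerivWithinAt_nonpos (convex_Ioo 0 q)
      (f' := fun x => H (x / q) / (x * H x) * (elasticity H H' (x / q) - elasticity H H' x))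
      (fun x hx => (hderiv x hx).continuousAt.continuousWithinAt) ?_ ?_ <;> rw [interior_Ioo]
    · exact fun x hx => (hderiv x hx).hasDerivWithinAt
    · intro x hx
      exact (ratio_deriv_nonpos_iff hHpos hq.2.le hx).2 <| hE (Ioo_subset_Ioo_right hq.2.le hx)
        (div_mem_Ioo_zero_one hx) (le_div_self hx.1.le hq.1 hq.2.le)
  · intro hratio x hx y hy hxy
    obtain rfl | hlt := hxy.eq_or_lt
    · exact le_rfl
    have hq : x / y ∈ Ioo (0 : ℝ) 1 := div_mem_Ioo_zero_one ⟨hx.1, hlt⟩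
    have hxq : x ∈ Ioo 0 (x / y) :=
      ⟨hx.1, (lt_div_iff₀ (hx.1.trans hlt)).2 (mul_lt_of_lt_one_right hx.1 hy.2)⟩
    have hnonpos := (hasDerivAt_ratio_comp_div hHpos hHdiff hq.2.le hxq).hasDerivWithinAt
      |>.nonpos_of_antitoneOn (isOpen_Ioo.preperfect x hxq) (hratio _ hq)
    simpa only [div_div_cancel₀ hx.1.ne'] using (ratio_deriv_nonpos_iff hHpos hq.2.le hxq).1 hnonpos

theorem used_system_aging_faster_iff (h h' H H' : ℝ → ℝ)
    (hdiff : ∀ p ∈ Set.Icc (0 : ℝ) 1, HasDerivAt h (h' p) p)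
    (hpos : ∀ p ∈ Set.Ioo (0 : ℝ) 1, 0 < h' p)
    (hmono : MonotoneOn h (Set.Icc (0 : ℝ) 1))
    (hmaps : ∀ p ∈ Set.Icc (0 : ℝ) 1, h p ∈ Set.Icc (0 : ℝ) 1)
    (h0 : h 0 = 0) (h1 : h 1 = 1)
    (hH : ∀ p ∈ Set.Ioo (0 : ℝ) 1, H p = p * h' p / h p)
    (hHpos : ∀ p ∈ Set.Ioo (0 : ℝ) 1, 0 < H p)
    (hHdiff : ∀ p ∈ Set.Ioo (0 : ℝ) 1, HasDerivAt H (H' p) p) :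
    AntitoneOn (fun p => p * H' p / H p) (Set.Ioo (0 : ℝ) 1) ↔
      ∀ q ∈ Set.Ioo (0 : ℝ) 1,
        AntitoneOn (fun p => H (p / q) / H p) (Set.Ioo 0 q) :=
  used_system_aging_faster_iff_general H H' hHpos hHdiff
end

section
/- Let r_X, r_Y : (0,∞) → (0,∞) be hazard rate functions with r_X/r_Y increasing, and let H₁, H₂ : (0,1) → (0,∞) with H₁ decreasing, H₁/H₂ decreasing, and suppose (1-p)H₁'(p)/H₁(p) is decreasing in p ∈ (0,1). If F̄_Y(x) ≤ F̄_X(x) and the reversed hazard rates satisfy r̃_Y(x) ≤ r̃_X(x) for all x > 0, then the function x ↦ [r_X(x)/r_Y(x)] · [H₁(F̄_X(x))/H₂(F̄_Y(x))] is increasing on (0,∞). -/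
lemma deriv_nonpos_of_antitoneOn' {f : ℝ → ℝ} {f' x : ℝ} {s : Set ℝ} (hs : IsOpen s)
    (hx : x ∈ s) (hf : ∀ a ∈ s, ∀ b ∈ s, a ≤ b → f b ≤ f a)
    (hd : HasDerivAt f f' x) : f' ≤ 0 := by
  have ht : Filter.Tendsto (slope f x) (nhdsWithin x (Set.Ioi x)) (nhds f') :=
    (hasDerivAt_iff_tendsto_slope.mp hd).mono_left
      (nhdsWithin_mono x (by intro y hy; exact ne_of_gt hy))
  refine le_of_tendsto ht ?_
  filter_upwards [self_mem_nhdsWithin,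
    mem_nhdsWithin_of_mem_nhds (hs.mem_nhds hx)] with y hy hys
  have hxy : (0:ℝ) < y - x := sub_pos.mpr hy
  have : f y ≤ f x := hf x hx y hys (le_of_lt hy)
  rw [slope_def_field]
  exact div_nonpos_of_nonpos_of_nonneg (sub_nonpos.mpr this) hxy.le

theorem coherent_aging_faster_hr
    (FX FY FX' FY' rX rY rtX rtY H₁ H₂ H₁' : ℝ → ℝ)
    (hFX : ∀ x ∈ Set.Ioi (0 : ℝ), FX x ∈ Set.Ioo (0 : ℝ) 1)
    (hFY : ∀ x ∈ Set.Ioi (0 : ℝ), FY x ∈ Set.Ioo (0 : ℝ) 1)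
    (hFXd : ∀ x ∈ Set.Ioi (0 : ℝ), HasDerivAt FX (FX' x) x)
    (hFYd : ∀ x ∈ Set.Ioi (0 : ℝ), HasDerivAt FY (FY' x) x)
    (hFXdec : StrictAntiOn FX (Set.Ioi (0 : ℝ)))
    (hFYdec : StrictAntiOn FY (Set.Ioi (0 : ℝ)))
    (hrX : ∀ x ∈ Set.Ioi (0 : ℝ), rX x = -FX' x / FX x)
    (hrY : ∀ x ∈ Set.Ioi (0 : ℝ), rY x = -FY' x / FY x)
    (hrtX : ∀ x ∈ Set.Ioi (0 : ℝ), rtX x = -FX' x / (1 - FX x))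
    (hrtY : ∀ x ∈ Set.Ioi (0 : ℝ), rtY x = -FY' x / (1 - FY x))
    (hrXpos : ∀ x ∈ Set.Ioi (0 : ℝ), 0 < rX x)
    (hrYpos : ∀ x ∈ Set.Ioi (0 : ℝ), 0 < rY x)
    (hratio : MonotoneOn (fun x => rX x / rY x) (Set.Ioi (0 : ℝ)))
    (hH₁pos : ∀ p ∈ Set.Ioo (0 : ℝ) 1, 0 < H₁ p)
    (hH₂pos : ∀ p ∈ Set.Ioo (0 : ℝ) 1, 0 < H₂ p)
    (hH₁d : ∀ p ∈ Set.Ioo (0 : ℝ) 1, HasDerivAt H₁ (H₁' p) p)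
    (hH₁dec : AntitoneOn H₁ (Set.Ioo (0 : ℝ) 1))
    (hH₁₂dec : AntitoneOn (fun p => H₁ p / H₂ p) (Set.Ioo (0 : ℝ) 1))
    (hcond : AntitoneOn (fun p => (1 - p) * H₁' p / H₁ p) (Set.Ioo (0 : ℝ) 1))
    (hFle : ∀ x ∈ Set.Ioi (0 : ℝ), FY x ≤ FX x)
    (hrtle : ∀ x ∈ Set.Ioi (0 : ℝ), rtY x ≤ rtX x) :
    MonotoneOn (fun x => rX x / rY x * (H₁ (FX x) / H₂ (FY x)))
      (Set.Ioi (0 : ℝ)) := by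
  set φ : ℝ → ℝ := fun x => H₁ (FX x) / H₁ (FY x) with hφdef
  set ψ : ℝ → ℝ := fun x => H₁ (FY x) / H₂ (FY x) with hψdef
  -- derivatives are nonpositive
  have hFX'le : ∀ x ∈ Set.Ioi (0:ℝ), FX' x ≤ 0 := fun x hx =>
    deriv_nonpos_of_antitoneOn' isOpen_Ioi hx
      (fun a ha b hb hab => hFXdec.antitoneOn ha hb hab) (hFXd x hx)
  have hFY'le : ∀ x ∈ Set.Ioi (0:ℝ), FY' x ≤ 0 := fun x hx =>
    deriv_nonpos_of_antitoneOn' isOpen_Ioi hx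
      (fun a ha b hb hab => hFYdec.antitoneOn ha hb hab) (hFYd x hx)
  have hH₁'le : ∀ p ∈ Set.Ioo (0:ℝ) 1, H₁' p ≤ 0 := fun p hp =>
    deriv_nonpos_of_antitoneOn' isOpen_Ioo hp
      (fun a ha b hb hab => hH₁dec ha hb hab) (hH₁d p hp)
  -- rtY nonneg
  have hrtYnn : ∀ x ∈ Set.Ioi (0:ℝ), 0 ≤ rtY x := by
    intro x hx
    rw [hrtY x hx]
    have h1 : (0:ℝ) < 1 - FY x := by have := (hFY x hx).2; linarith
    exact div_nonneg (by have := hFY'le x hx; linarith) h1.le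
  -- derivative of φ
  have hφd : ∀ x ∈ Set.Ioi (0:ℝ), HasDerivAt φ
      ((H₁' (FX x) * FX' x * H₁ (FY x) - H₁ (FX x) * (H₁' (FY x) * FY' x)) /
        (H₁ (FY x)) ^ 2) x := by
    intro x hx
    have h1 : HasDerivAt (fun y => H₁ (FX y)) (H₁' (FX x) * FX' x) x :=
      (hH₁d (FX x) (hFX x hx)).comp x (hFXd x hx)
    have h2 : HasDerivAt (fun y => H₁ (FY y)) (H₁' (FY x) * FY' x) x :=
      (hH₁d (FY x) (hFY x hx)).comp x (hFYd x hx)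
    exact h1.div h2 (ne_of_gt (hH₁pos _ (hFY x hx)))
  -- sign of the derivative of φ
  have hφd0 : ∀ x ∈ Set.Ioi (0:ℝ),
      0 ≤ (H₁' (FX x) * FX' x * H₁ (FY x) - H₁ (FX x) * (H₁' (FY x) * FY' x)) /
        (H₁ (FY x)) ^ 2 := by
    intro x hx
    have hA := hFX x hx
    have hB := hFY x hx
    have hApos := hH₁pos _ hA
    have hBpos := hH₁pos _ hB
    have h1A : (0:ℝ) < 1 - FX x := by have := hA.2; linarith
    have h1B : (0:ℝ) < 1 - FY x := by have := hB.2; linarith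
    -- express FX', FY' via reversed hazard rates
    have hFX'eq : FX' x = -(rtX x * (1 - FX x)) := by
      have := hrtX x hx
      field_simp at this
      linarith
    have hFY'eq : FY' x = -(rtY x * (1 - FY x)) := by
      have := hrtY x hx
      field_simp at this
      linarith
    set gA : ℝ := (1 - FX x) * H₁' (FX x) / H₁ (FX x) with hgA
    set gB : ℝ := (1 - FY x) * H₁' (FY x) / H₁ (FY x) with hgB
    have hgle : gA ≤ gB := hcond hB hA (hFle x hx)
    have hgAnp : gA ≤ 0 :=
      div_nonpos_of_nonpos_of_nonneg
        (mul_nonpos_of_nonneg_of_nonpos h1A.le (hH₁'le _ hA)) hApos.le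
    have hrt := hrtle x hx
    have hrtY0 := hrtYnn x hx
    -- key : gA * rtX ≤ gB * rtY
    have hkey : gA * rtX x ≤ gB * rtY x := by
      calc gA * rtX x ≤ gA * rtY x := by nlinarith
        _ ≤ gB * rtY x := mul_le_mul_of_nonneg_right hgle hrtY0
    have hAeq : (1 - FX x) * H₁' (FX x) = gA * H₁ (FX x) := by
      rw [hgA]; field_simp
    have hBeq : (1 - FY x) * H₁' (FY x) = gB * H₁ (FY x) := by
      rw [hgB]; field_simp
    apply div_nonneg _ (sq_nonneg _)
    have hmul : gA * rtX x * (H₁ (FX x) * H₁ (FY x)) ≤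
        gB * rtY x * (H₁ (FX x) * H₁ (FY x)) :=
      mul_le_mul_of_nonneg_right hkey (by positivity)
    rw [hFX'eq, hFY'eq]
    have hexp : H₁' (FX x) * -(rtX x * (1 - FX x)) * H₁ (FY x) -
        H₁ (FX x) * (H₁' (FY x) * -(rtY x * (1 - FY x))) =
        gB * rtY x * (H₁ (FX x) * H₁ (FY x)) - gA * rtX x * (H₁ (FX x) * H₁ (FY x)) := by
      linear_combination (-(rtX x) * H₁ (FY x)) * hAeq + (rtY x * H₁ (FX x)) * hBeq
    linarith [hmul]
  -- φ is monotone
  have hφmono : MonotoneOn φ (Set.Ioi (0:ℝ)) := by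
    apply monotoneOn_of_hasDerivWithinAt_nonneg (f' := fun x =>
      (H₁' (FX x) * FX' x * H₁ (FY x) - H₁ (FX x) * (H₁' (FY x) * FY' x)) /
        (H₁ (FY x)) ^ 2) (convex_Ioi 0)
    · intro x hx
      exact (hφd x hx).continuousAt.continuousWithinAt
    · intro x hx
      rw [interior_Ioi] at hx ⊢
      exact (hφd x hx).hasDerivWithinAt
    · intro x hx
      rw [interior_Ioi] at hx
      exact hφd0 x hx
  -- ψ is monotone
  have hψmono : MonotoneOn ψ (Set.Ioi (0:ℝ)) := by
    intro a ha b hb hab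
    exact hH₁₂dec (hFY b hb) (hFY a ha) (hFYdec.antitoneOn ha hb hab)
  -- positivity
  have hφpos : ∀ x ∈ Set.Ioi (0:ℝ), 0 < φ x := fun x hx =>
    div_pos (hH₁pos _ (hFX x hx)) (hH₁pos _ (hFY x hx))
  have hψpos : ∀ x ∈ Set.Ioi (0:ℝ), 0 < ψ x := fun x hx =>
    div_pos (hH₁pos _ (hFY x hx)) (hH₂pos _ (hFY x hx))
  -- factor the target
  have hfact : ∀ x ∈ Set.Ioi (0:ℝ), H₁ (FX x) / H₂ (FY x) = φ x * ψ x := by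
    intro x hx
    have h1 : H₁ (FY x) ≠ 0 := ne_of_gt (hH₁pos _ (hFY x hx))
    have h2 : H₂ (FY x) ≠ 0 := ne_of_gt (hH₂pos _ (hFY x hx))
    simp only [hφdef, hψdef]
    field_simp
  intro a ha b hb hab
  simp only [hfact a ha, hfact b hb]
  have hr := hratio ha hb hab
  have hr0 : (0:ℝ) ≤ rX a / rY a :=
    (div_pos (hrXpos a ha) (hrYpos a ha)).le
  have hrb0 : (0:ℝ) ≤ rX b / rY b :=
    (div_pos (hrXpos b hb) (hrYpos b hb)).le
  exact mul_le_mul hr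
    (mul_le_mul (hφmono ha hb hab) (hψmono ha hb hab) (hψpos a ha).le
      (le_of_lt (lt_of_lt_of_le (hφpos a ha) (hφmono ha hb hab))))
    (mul_nonneg (hφpos a ha).le (hψpos a ha).le) hrb0
end

section
/- Let R : (0,1) → (0,∞) be differentiable such that p R'(p)/R(p) is decreasing and nonnegative on (0,1). Then for every natural number m ≥ 1, the function p ↦ R(p)/R(1-(1-p)^{m+1}) is increasing on (0,1). -/
/-!
Write `e(x) = x R'(x) / R(x)` and `g(p) = 1 - (1 - p) ^ (m + 1)`. The derivative of
`R p / R (g p)` has the sign of `e(p) / p - e(g p) g'(p) / g p`. Since `p ≤ g p` and `e` is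
antitone, `e(g p) ≤ e(p)`; since `p g'(p) ≤ g p` (the tangent-line bound for `q ↦ q ^ (m + 1)`
at `q = 1 - p`) and `e ≥ 0`, the factor `p g'(p) / g p` can only decrease `e(g p)`.
-/

open Set

lemma one_sub_one_sub_pow_mem_Ioo {p : ℝ} (hp : p ∈ Ioo 0 1) {n : ℕ} (hn : n ≠ 0) :
    1 - (1 - p) ^ n ∈ Ioo 0 1 := by
  have hq0 : 0 < 1 - p := by linarith [hp.2]
  have hq1 : 1 - p < 1 := by linarith [hp.1]
  constructor
  · linarith [pow_lt_one₀ hq0.le hq1 hn]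
  · linarith [pow_pos hq0 n]

lemma le_one_sub_one_sub_pow {p : ℝ} (hp0 : 0 ≤ p) (hp1 : p ≤ 1) {n : ℕ} (hn : n ≠ 0) :
    p ≤ 1 - (1 - p) ^ n := by
  linarith [pow_le_of_le_one (sub_nonneg.2 hp1) (by linarith) hn]

lemma succ_mul_one_sub_mul_pow_le {q : ℝ} (hq0 : 0 ≤ q) (hq1 : q ≤ 1) (n : ℕ) :
    (n + 1) * (1 - q) * q ^ n ≤ 1 - q ^ (n + 1) := by
  have hsum : (n + 1 : ℝ) * q ^ n ≤ ∑ i ∈ Finset.range (n + 1), q ^ i := by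
    have := Finset.card_nsmul_le_sum (Finset.range (n + 1)) (q ^ ·) (q ^ n) fun i hi =>
      pow_le_pow_of_le_one hq0 hq1 (Nat.lt_succ_iff.1 (Finset.mem_range.1 hi))
    simpa using this
  rw [← mul_neg_geom_sum]
  nlinarith [mul_le_mul_of_nonneg_left hsum (sub_nonneg.2 hq1)]

lemma hasDerivAt_one_sub_one_sub_pow (n : ℕ) (x : ℝ) :
    HasDerivAt (fun x => 1 - (1 - x) ^ (n + 1)) ((n + 1) * (1 - x) ^ n) x := by
  refine ((((hasDerivAt_id' x).const_sub 1).pow (n + 1)).const_sub 1).congr_deriv ?_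
  push_cast
  ring

lemma monotoneOn_div_of_hasDerivAt {f g f' g' : ℝ → ℝ} {s : Set ℝ} (hs : Convex ℝ s)
    (hso : IsOpen s) (hf : ∀ x ∈ s, HasDerivAt f (f' x) x)
    (hg : ∀ x ∈ s, HasDerivAt g (g' x) x)
    (hg0 : ∀ x ∈ s, 0 < g x) (hle : ∀ x ∈ s, f x * g' x ≤ f' x * g x) :
    MonotoneOn (fun x => f x / g x) s := by
  have hdiv : ∀ x ∈ s, HasDerivAt (fun x => f x / g x)
      ((f' x * g x - f x * g' x) / g x ^ 2) x :=
    fun x hx => (hf x hx).div (hg x hx) (hg0 x hx).ne'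
  refine monotoneOn_of_hasDerivWithinAt_nonneg
    (f' := fun x => (f' x * g x - f x * g' x) / g x ^ 2) hs
    (fun x hx => (hdiv x hx).continuousAt.continuousWithinAt) ?_ ?_
  · rw [hso.interior_eq]
    exact fun x hx => (hdiv x hx).hasDerivWithinAt
  · rw [hso.interior_eq]
    exact fun x hx => div_nonneg (sub_nonneg.2 (hle x hx)) (sq_nonneg _)

theorem monotoneOn_div_comp_of_antitoneOn_elasticity {R R' φ φ' : ℝ → ℝ} {s : Set ℝ}
    (hs : Convex ℝ s) (hso : IsOpen s) (hs0 : ∀ x ∈ s, 0 < x)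
    (hRpos : ∀ x ∈ s, 0 < R x) (hR : ∀ x ∈ s, HasDerivAt R (R' x) x)
    (hdec : AntitoneOn (fun x => x * R' x / R x) s) (hnonneg : ∀ x ∈ s, 0 ≤ x * R' x / R x)
    (hφ : ∀ x ∈ s, HasDerivAt φ (φ' x) x) (hφs : MapsTo φ s s)
    (hle : ∀ x ∈ s, x ≤ φ x)
    (hφ' : ∀ x ∈ s, x * φ' x ≤ φ x) :
    MonotoneOn (fun x => R x / R (φ x)) s := by
  refine monotoneOn_div_of_hasDerivAt hs hso hR (fun x hx => (hR _ (hφs hx)).comp x (hφ x hx))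
    (fun x hx => hRpos _ (hφs hx)) fun x hx => ?_
  have hy := hφs hx
  have hx0 := hs0 x hx
  have hy0 := hs0 _ hy
  have hRx := hRpos x hx
  have hRy := hRpos _ hy
  have hR'y : 0 ≤ R' (φ x) :=
    (mul_nonneg_iff_of_pos_left hy0).1 (by simpa using (le_div_iff₀ hRy).1 (hnonneg _ hy))
  have hcross : φ x * R' (φ x) * R x ≤ x * R' x * R (φ x) := by
    have := hdec hx hy (hle x hx)
    rwa [div_le_div_iff₀ hRy hRx] at this
  have hscale : x * (R x * (R' (φ x) * φ' x)) ≤ x * (R' x * R (φ x)) := by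
    calc x * (R x * (R' (φ x) * φ' x)) = R x * R' (φ x) * (x * φ' x) := by ring
      _ ≤ R x * R' (φ x) * φ x := by gcongr; exact hφ' x hx
      _ ≤ x * (R' x * R (φ x)) := by linarith
  exact le_of_mul_le_mul_left hscale hx0

theorem redundancy_component_vs_system_general (R R' : ℝ → ℝ)
    (hRpos : ∀ p ∈ Set.Ioo (0 : ℝ) 1, 0 < R p)
    (hRd : ∀ p ∈ Set.Ioo (0 : ℝ) 1, HasDerivAt R (R' p) p)
    (hdec : AntitoneOn (fun p => p * R' p / R p) (Set.Ioo (0 : ℝ) 1))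
    (hnonneg : ∀ p ∈ Set.Ioo (0 : ℝ) 1, 0 ≤ p * R' p / R p)
    (m : ℕ) :
    MonotoneOn (fun p => R p / R (1 - (1 - p) ^ (m + 1))) (Set.Ioo (0 : ℝ) 1) := by
  refine monotoneOn_div_comp_of_antitoneOn_elasticity (convex_Ioo 0 1) isOpen_Ioo
    (fun x hx => hx.1) hRpos hRd hdec hnonneg (fun x _ => hasDerivAt_one_sub_one_sub_pow m x)
    (fun x hx => one_sub_one_sub_pow_mem_Ioo hx m.succ_ne_zero)
    (fun x hx => le_one_sub_one_sub_pow hx.1.le hx.2.le m.succ_ne_zero) fun x hx => ?_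
  have htangent := succ_mul_one_sub_mul_pow_le (sub_nonneg.2 hx.2.le) (sub_le_self 1 hx.1.le) m
  rw [sub_sub_cancel] at htangent
  linarith

theorem redundancy_component_vs_system (R R' : ℝ → ℝ)
    (hRpos : ∀ p ∈ Set.Ioo (0 : ℝ) 1, 0 < R p)
    (hRd : ∀ p ∈ Set.Ioo (0 : ℝ) 1, HasDerivAt R (R' p) p)
    (hdec : AntitoneOn (fun p => p * R' p / R p) (Set.Ioo (0 : ℝ) 1))
    (hnonneg : ∀ p ∈ Set.Ioo (0 : ℝ) 1, 0 ≤ p * R' p / R p)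
    (m : ℕ) (hm : 1 ≤ m) :
    MonotoneOn (fun p => R p / R (1 - (1 - p) ^ (m + 1))) (Set.Ioo (0 : ℝ) 1) :=
  redundancy_component_vs_system_general R R' hRpos hRd hdec hnonneg m
end

section
/- Let h(p) = 2p² - p³ - θ p³(1-p)³ for θ ∈ [-1,1]. Then h is increasing on [0,1], h(0) = 0, and h(1) = 1. (h is the dual distortion function of the coherent system min{X₁, max{X₂,X₃}} with FGM copula.) -/
/-!
The derivative of `h` is
`h' p = p (4 - 3p) - 3θ p² (1 - p)² (1 - 2p)`. On `[0, 1]` the perturbation is at most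
`3p · p(1 - p) · (1 - p)|1 - 2p| ≤ 3p/4`, while `p (4 - 3p) ≥ p`, so `h' ≥ 0` whenever `|θ| ≤ 1`.
Monotonicity together with `h 0 = 0` and `h 1 = 1` then gives `h [0, 1] ⊆ [0, 1]`.
-/

namespace FGM

def distortion (θ p : ℝ) : ℝ := 2 * p ^ 2 - p ^ 3 - θ * p ^ 3 * (1 - p) ^ 3

def distortionDeriv (θ p : ℝ) : ℝ := p * (4 - 3 * p) - 3 * θ * p ^ 2 * (1 - p) ^ 2 * (1 - 2 * p)

theorem hasDerivAt_distortion (θ p : ℝ) :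
    HasDerivAt (distortion θ) (distortionDeriv θ p) p := by
  have h := (((hasDerivAt_pow 2 p).const_mul 2).fun_sub (hasDerivAt_pow 3 p)).fun_sub
    (((hasDerivAt_pow 3 p).const_mul θ).fun_mul (((hasDerivAt_id p).const_sub 1).fun_pow 3))
  refine h.congr_deriv ?_
  simp only [distortionDeriv, id, Nat.cast_ofNat]
  ring

theorem distortionDeriv_nonneg {θ p : ℝ} (hθ : |θ| ≤ 1) (hp : p ∈ Set.Icc (0 : ℝ) 1) :
    0 ≤ distortionDeriv θ p := by
  obtain ⟨hp₀, hp₁⟩ := hp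
  have hvar : p * (1 - p) ≤ 1 / 4 := by nlinarith [sq_nonneg (2 * p - 1)]
  have htail : |θ * ((1 - p) * (1 - 2 * p))| ≤ 1 := by
    rw [abs_mul]
    refine mul_le_one₀ hθ (abs_nonneg _) (abs_le.mpr ⟨?_, ?_⟩) <;> nlinarith
  have hpert : 3 * θ * p ^ 2 * (1 - p) ^ 2 * (1 - 2 * p) ≤ 3 * p / 4 := by
    have hprod : 0 ≤ p * (p * (1 - p)) := by positivity
    calc 3 * θ * p ^ 2 * (1 - p) ^ 2 * (1 - 2 * p)
        = 3 * (p * (p * (1 - p))) * (θ * ((1 - p) * (1 - 2 * p))) := by ring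
      _ ≤ 3 * (p * (p * (1 - p))) * 1 := by
          gcongr; exact (le_abs_self _).trans htail
      _ ≤ 3 * p / 4 := by nlinarith
  have hmain : p ≤ p * (4 - 3 * p) := by nlinarith
  unfold distortionDeriv
  linarith

theorem monotoneOn_distortion {θ : ℝ} (hθ : |θ| ≤ 1) :
    MonotoneOn (distortion θ) (Set.Icc 0 1) :=
  monotoneOn_of_hasDerivWithinAt_nonneg (convex_Icc 0 1)
    (HasDerivAt.continuousOn fun p _ ↦ hasDerivAt_distortion θ p)
    (fun p _ ↦ (hasDerivAt_distortion θ p).hasDerivWithinAt)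
    (fun _ hp ↦ distortionDeriv_nonneg hθ (interior_subset hp))

theorem distortion_mem_Icc {θ p : ℝ} (hθ : |θ| ≤ 1) (hp : p ∈ Set.Icc (0 : ℝ) 1) :
    distortion θ p ∈ Set.Icc 0 1 := by
  have hmono := monotoneOn_distortion hθ
  have h₀ := hmono (Set.left_mem_Icc.mpr zero_le_one) hp hp.1
  have h₁ := hmono hp (Set.right_mem_Icc.mpr zero_le_one) hp.2
  simp only [distortion] at h₀ h₁ ⊢
  constructor <;> linarith

end FGM

theorem fgm_domination_function (θ : ℝ) (hθ : θ ∈ Set.Icc (-1 : ℝ) 1) :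
    MonotoneOn (fun p : ℝ => 2 * p ^ 2 - p ^ 3 - θ * p ^ 3 * (1 - p) ^ 3)
        (Set.Icc (0 : ℝ) 1) ∧
      (2 * (0:ℝ) ^ 2 - (0:ℝ) ^ 3 - θ * (0:ℝ) ^ 3 * (1 - 0) ^ 3 = 0) ∧
      (2 * (1:ℝ) ^ 2 - (1:ℝ) ^ 3 - θ * (1:ℝ) ^ 3 * (1 - 1) ^ 3 = 1) ∧
      ∀ p ∈ Set.Icc (0 : ℝ) 1,
        2 * p ^ 2 - p ^ 3 - θ * p ^ 3 * (1 - p) ^ 3 ∈ Set.Icc (0 : ℝ) 1 := by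
  have hθ' : |θ| ≤ 1 := abs_le.mpr hθ
  exact ⟨FGM.monotoneOn_distortion hθ', by ring, by ring,
    fun p hp ↦ FGM.distortion_mem_Icc hθ' hp⟩
end
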